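/- arXiv:2106.05579 — 7 statements merged into one kernel-verified Lean document; each statement's English description precedes it below -/
import Mathlib

section
/- Let f : [0,∞) → [0,1] be differentiable, convex, with lim_{x→∞} f(x) = 0, and define a(x) := f(x) − ∫₀^∞ e^{−t} f(t + x) dt. Then a′(x) ≤ 0 for all x ≥ 0, and the inequality is strict at every x with f(x) > 0. -/
/-!
Substituting `s = t + x` gives `I x := ∫₀^∞ e^{-t} f (t + x) dt = e^x ∫ₓ^∞ e^{-s} f s ds`,
so `I' = I - f` and `a' = f + f' - I`. Convexity puts `f` above its tangent line,
`f (t + x) ≥ f x + t f' x`, and integrating against `e^{-t}` gives `I x ≥ f x + f' x`.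
If `f x > 0` then `f' x < 0` (otherwise `f ≥ f x` beyond `x`, contradicting `f → 0`), so the
tangent line eventually falls below `0 ≤ f` and the inequality is strict.
-/

open MeasureTheory Real Set Filter Topology

lemma integrableOn_exp_neg_mul_id : IntegrableOn (fun t : ℝ => exp (-t) * t) (Ioi 0) := by
  have h := GammaIntegral_convergent (s := 2) two_pos
  norm_num at h
  exact h

lemma integral_exp_neg_mul_id : ∫ t in Ioi (0 : ℝ), exp (-t) * t = 1 := by
  have h := integral_rpow_mul_exp_neg_mul_Ioi (a := 2) (r := 1) two_pos one_pos
  norm_num at h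
  simpa [mul_comm] using h

lemma integrableOn_exp_neg_mul_affine (α β : ℝ) :
    IntegrableOn (fun t => exp (-t) * (α + t * β)) (Ioi 0) := by
  have h : IntegrableOn (fun t => α * exp (-t) + β * (exp (-t) * t)) (Ioi 0) :=
    ((integrableOn_exp_neg_Ioi 0).const_mul α).add (integrableOn_exp_neg_mul_id.const_mul β)
  exact h.congr_fun (fun t _ => by ring) measurableSet_Ioi

lemma integral_exp_neg_mul_affine (α β : ℝ) :
    ∫ t in Ioi (0 : ℝ), exp (-t) * (α + t * β) = α + β := by
  have h : ∀ t : ℝ, exp (-t) * (α + t * β) = α * exp (-t) + β * (exp (-t) * t) :=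
    fun t => by ring
  simp_rw [h]
  rw [integral_add ((integrableOn_exp_neg_Ioi 0).const_mul α)
      (integrableOn_exp_neg_mul_id.const_mul β), integral_const_mul, integral_const_mul,
    integral_exp_neg_Ioi_zero, integral_exp_neg_mul_id, mul_one, mul_one]

lemma integrableOn_exp_neg_mul_of_norm_le {φ : ℝ → ℝ} {c C : ℝ}
    (hφ : ContinuousOn φ (Ioi c)) (hb : ∀ s ∈ Ioi c, ‖φ s‖ ≤ C) :
    IntegrableOn (fun s => exp (-s) * φ s) (Ioi c) :=
  (integrableOn_exp_neg_Ioi c).mul_bdd (hφ.aestronglyMeasurable measurableSet_Ioi)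
    ((ae_restrict_iff' measurableSet_Ioi).mpr (ae_of_all _ hb))

lemma integral_exp_neg_mul_comp_add (φ : ℝ → ℝ) (y : ℝ) :
    ∫ t in Ioi 0, exp (-t) * φ (t + y) = exp y * ∫ s in Ioi y, exp (-s) * φ s := by
  have hpre : (fun t : ℝ => t + y) ⁻¹' Ioi y = Ioi 0 := by
    ext t
    simp
  have h := (measurePreserving_add_right volume y).setIntegral_preimage_emb
    (measurableEmbedding_addRight y) (fun s => exp (-s) * φ s) (Ioi y)
  rw [hpre] at h
  rw [← h, ← integral_const_mul]
  refine integral_congr_ae (ae_of_all _ fun t => ?_)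
  simp only [neg_add, exp_add, exp_neg y]
  field_simp

section

variable {E : Type*} [NormedAddCommGroup E] [NormedSpace ℝ E] [CompleteSpace E]

lemma hasDerivWithinAt_integral_Ioi {F : ℝ → E} {c x : ℝ} (hint : IntegrableOn F (Ioi c))
    (hcont : ContinuousOn F (Ici c)) (hx : c ≤ x) :
    HasDerivWithinAt (fun y => ∫ s in Ioi y, F s) (-F x) (Ici c) x := by
  have : Fact (x ∈ Icc c (x + 1)) := ⟨⟨hx, by linarith⟩⟩
  have hIcc : Icc c (x + 1) ∈ 𝓝[Ici c] x :=
    inter_mem_nhdsWithin (Ici c) (Iic_mem_nhds (by linarith))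
  have hcont' : ContinuousOn F (Icc c (x + 1)) := hcont.mono Icc_subset_Ici_self
  have hFTC : HasDerivWithinAt (fun y => ∫ s in c..y, F s) (F x) (Icc c (x + 1)) x :=
    intervalIntegral.integral_hasDerivWithinAt_right
      ((hcont'.mono (uIcc_of_le hx ▸ Icc_subset_Icc_right (by linarith))).intervalIntegrable)
      (hcont'.stronglyMeasurableAtFilter_nhdsWithin measurableSet_Icc x)
      (hcont' x Fact.out)
  have hsplit : ∀ y ∈ Ici c, ∫ s in Ioi y, F s = (∫ s in Ioi c, F s) - ∫ s in c..y, F s :=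
    fun y hy => eq_sub_of_add_eq' (intervalIntegral.integral_interval_add_Ioi hint
      (hint.mono_set (Ioi_subset_Ioi hy)))
  have h := ((hasDerivWithinAt_const x _ (∫ s in Ioi c, F s)).sub hFTC).mono_of_mem_nhdsWithin
    hIcc
  rw [zero_sub] at h
  exact h.congr (fun y hy => hsplit y hy) (hsplit x hx)

end

lemma hasDerivWithinAt_integral_exp_neg_mul_comp_add {φ : ℝ → ℝ} {c x : ℝ}
    (hcont : ContinuousOn φ (Ici c)) (hint : IntegrableOn (fun s => exp (-s) * φ s) (Ioi c))
    (hx : c ≤ x) :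
    HasDerivWithinAt (fun y => ∫ t in Ioi 0, exp (-t) * φ (t + y))
      ((∫ t in Ioi 0, exp (-t) * φ (t + x)) - φ x) (Ici c) x := by
  simp_rw [integral_exp_neg_mul_comp_add φ]
  have h := (hasDerivAt_exp x).hasDerivWithinAt.mul (hasDerivWithinAt_integral_Ioi hint
    ((continuous_exp.comp continuous_neg).continuousOn.mul hcont) hx)
  refine h.congr_deriv ?_
  rw [mul_neg, ← mul_assoc, ← exp_add, add_neg_cancel, exp_zero, one_mul, sub_eq_add_neg]

lemma ConvexOn.add_mul_le_of_hasDerivWithinAt {S : Set ℝ} {f : ℝ → ℝ} {f' x t : ℝ}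
    (hfc : ConvexOn ℝ S f) (hx : x ∈ S) (htx : t + x ∈ S) (ht : 0 < t)
    (hf : HasDerivWithinAt f f' S x) : f x + t * f' ≤ f (t + x) := by
  have h := hfc.le_slope_of_hasDerivWithinAt hx htx (by linarith) hf
  rw [slope_def_field, add_sub_cancel_right, le_div_iff₀ ht] at h
  linarith

lemma ConvexOn.neg_of_hasDerivWithinAt_of_tendsto {f : ℝ → ℝ} {f' c x L : ℝ}
    (hfc : ConvexOn ℝ (Ici c) f) (hx : c ≤ x) (hf : HasDerivWithinAt f f' (Ici c) x)
    (hlim : Tendsto f atTop (𝓝 L)) (hLx : L < f x) : f' < 0 := by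
  by_contra! hf'
  have hev : ∀ᶠ y in atTop, f x ≤ f y := by
    filter_upwards [eventually_gt_atTop x] with y hy
    have h := hfc.add_mul_le_of_hasDerivWithinAt hx (show y - x + x ∈ Ici c by simp; linarith)
      (sub_pos.mpr hy) hf
    rw [sub_add_cancel] at h
    nlinarith [mul_nonneg (sub_pos.mpr hy).le hf']
  exact hLx.not_ge (ge_of_tendsto hlim hev)

lemma integral_exp_neg_mul_sub_affine {φ : ℝ → ℝ}
    (hint : IntegrableOn (fun t => exp (-t) * φ t) (Ioi 0)) (α β : ℝ) :
    ∫ t in Ioi 0, (exp (-t) * φ t - exp (-t) * (α + t * β))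
      = (∫ t in Ioi 0, exp (-t) * φ t) - (α + β) := by
  rw [integral_sub hint (integrableOn_exp_neg_mul_affine α β), integral_exp_neg_mul_affine]

lemma add_le_integral_exp_neg_mul {φ : ℝ → ℝ} {α β : ℝ}
    (hint : IntegrableOn (fun t => exp (-t) * φ t) (Ioi 0))
    (hle : ∀ t ∈ Ioi (0 : ℝ), α + t * β ≤ φ t) :
    α + β ≤ ∫ t in Ioi 0, exp (-t) * φ t := by
  have h : 0 ≤ ∫ t in Ioi 0, (exp (-t) * φ t - exp (-t) * (α + t * β)) :=
    setIntegral_nonneg measurableSet_Ioi fun t ht =>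
      sub_nonneg.mpr (mul_le_mul_of_nonneg_left (hle t ht) (exp_pos _).le)
  rw [integral_exp_neg_mul_sub_affine hint] at h
  linarith

lemma add_lt_integral_exp_neg_mul {φ : ℝ → ℝ} {α β : ℝ}
    (hint : IntegrableOn (fun t => exp (-t) * φ t) (Ioi 0))
    (hle : ∀ t ∈ Ioi (0 : ℝ), α + t * β ≤ φ t) (hφ : ∀ t ∈ Ioi (0 : ℝ), 0 ≤ φ t)
    (hβ : β < 0) :
    α + β < ∫ t in Ioi 0, exp (-t) * φ t := by
  set d := fun t => exp (-t) * φ t - exp (-t) * (α + t * β)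
  have hd : 0 ≤ᵐ[volume.restrict (Ioi 0)] d :=
    (ae_restrict_iff' measurableSet_Ioi).mpr (ae_of_all _ fun t ht =>
      sub_nonneg.mpr (mul_le_mul_of_nonneg_left (hle t ht) (exp_pos _).le))
  have hsupp : Ioi (max 0 (α / -β)) ⊆ Function.support d ∩ Ioi 0 := by
    intro t ht
    rw [mem_Ioi, max_lt_iff, div_lt_iff₀ (neg_pos.mpr hβ)] at ht
    refine ⟨ne_of_gt ?_, ht.1⟩
    have := hφ t ht.1
    simp only [d, ← mul_sub]
    exact mul_pos (exp_pos _) (by linarith)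
  have h := (setIntegral_pos_iff_support_of_nonneg_ae hd
    (hint.sub (integrableOn_exp_neg_mul_affine α β))).mpr
    ((measure_mono hsupp).trans_lt' (by simp))
  rw [integral_exp_neg_mul_sub_affine hint] at h
  linarith

/-- Let `f : [0,∞) → [0,1]` be differentiable, convex, with
`f(x) → 0` as `x → ∞`, and define `a(x) := f(x) − ∫₀^∞ e^{−t} f(t + x) dt`.
Then `a′(x) ≤ 0` for all `x ≥ 0`, with strict inequality at every `x` where
`f(x) > 0`. -/
theorem stmt1
    (f f' : ℝ → ℝ)
    (hf01 : ∀ x, 0 ≤ x → f x ∈ Set.Icc (0 : ℝ) 1)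
    (hderiv : ∀ x, 0 ≤ x → HasDerivWithinAt f (f' x) (Set.Ici 0) x)
    (hconv : ConvexOn ℝ (Set.Ici 0) f)
    (hlim : Filter.Tendsto f Filter.atTop (nhds 0))
    (a : ℝ → ℝ)
    (ha : ∀ x, a x = f x - ∫ t in Set.Ioi (0 : ℝ), Real.exp (-t) * f (t + x)) :
    ∀ x, 0 ≤ x → ∃ a' : ℝ, HasDerivWithinAt a a' (Set.Ici 0) x ∧
      a' ≤ 0 ∧ (0 < f x → a' < 0) := by
  intro x hx
  have hcont : ContinuousOn f (Ici 0) := fun y hy => (hderiv y hy).continuousWithinAt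
  have hnorm : ∀ s ∈ Ici (0 : ℝ), ‖f s‖ ≤ 1 := fun s hs => by
    obtain ⟨h0, h1⟩ := hf01 s hs
    rwa [Real.norm_of_nonneg h0]
  have hint : IntegrableOn (fun s => exp (-s) * f s) (Ioi 0) :=
    integrableOn_exp_neg_mul_of_norm_le (hcont.mono Ioi_subset_Ici_self)
      fun s hs => hnorm s (mem_Ici_of_Ioi hs)
  have hint_x : IntegrableOn (fun t => exp (-t) * f (t + x)) (Ioi 0) :=
    integrableOn_exp_neg_mul_of_norm_le
      (hcont.comp (continuous_add_const x).continuousOn fun t ht => add_nonneg (le_of_lt ht) hx)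
      fun t ht => hnorm (t + x) (add_nonneg (le_of_lt ht) hx)
  have htangent : ∀ t ∈ Ioi (0 : ℝ), f x + t * f' x ≤ f (t + x) := fun t ht =>
    hconv.add_mul_le_of_hasDerivWithinAt hx (add_nonneg (le_of_lt ht) hx) ht (hderiv x hx)
  refine ⟨f' x - ((∫ t in Ioi 0, exp (-t) * f (t + x)) - f x), ?_, ?_, fun hfx => ?_⟩
  · exact ((hderiv x hx).sub (hasDerivWithinAt_integral_exp_neg_mul_comp_add hcont hint hx)).congr
      (fun y _ => ha y) (ha x)
  · linarith [add_le_integral_exp_neg_mul hint_x htangent]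
  · have hf' := hconv.neg_of_hasDerivWithinAt_of_tendsto hx (hderiv x hx) hlim hfx
    linarith [add_lt_integral_exp_neg_mul hint_x htangent
      (fun t ht => (hf01 (t + x) (add_nonneg (le_of_lt ht) hx)).1) hf']
end

section
/- Let F : ℤ≥0 → ℝ be bounded, let m be a positive integer, and define f : [0,∞) → ℝ by f(x) := Σ_{k=0}^∞ e^{−mx}(mx)^k/k! · F(k) (i.e., f(x) = E[F(K)] for K Poisson with mean mx). Then for every ℓ ≥ 1 and every x ≥ 0, f is ℓ-times differentiable and f^{(ℓ)}(x) = m^ℓ · Σ_{k=0}^∞ e^{−mx}(mx)^k/k! · (Δ^{(ℓ)}F)(k), where Δ is the discrete derivative operator (ΔF)(n) := F(n+1) − F(n) and Δ^{(ℓ)} denotes its ℓ-fold composition. -/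
/-!
Write `f(x) = e^{-mx} G(mx)` with `G(y) = Σ F(k) yᵏ/k!`. Differentiating `G` term by term
shifts the coefficients, `G' = Σ F(k+1) yᵏ/k!`, so the product rule gives
`f' = m · e^{-mx} (G_{F(·+1)} - G_F)(mx)`, which is `m` times the Poisson smoothing of `ΔF`.
Since `ΔF` is again bounded, this iterates.
-/

open Set

/-- The discrete derivative operator `(ΔF)(n) := F(n+1) − F(n)`. -/
def discreteDeriv (F : ℕ → ℝ) : ℕ → ℝ := fun n => F (n + 1) - F n

lemma abs_discreteDeriv_le {F : ℕ → ℝ} {C : ℝ} (hF : ∀ k, |F k| ≤ C) (k : ℕ) :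
    |discreteDeriv F k| ≤ 2 * C :=
  calc |F (k + 1) - F k| ≤ |F (k + 1)| + |F k| := abs_sub _ _
    _ ≤ 2 * C := by linarith [hF (k + 1), hF k]

lemma abs_iterate_discreteDeriv_le {F : ℕ → ℝ} {C : ℝ} (hF : ∀ k, |F k| ≤ C) (n k : ℕ) :
    |discreteDeriv^[n] F k| ≤ 2 ^ n * C := by
  induction n generalizing k with
  | zero => simpa using hF k
  | succ n ih =>
    rw [Function.iterate_succ_apply', pow_succ', mul_assoc]
    exact abs_discreteDeriv_le ih k

noncomputable section

def egf (F : ℕ → ℝ) (x : ℝ) : ℝ := ∑' k : ℕ, F k * x ^ k / (Nat.factorial k)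

/-- The Poisson smoothing `x ↦ E[F(K)]`, `K ~ Poisson(m x)`. -/
def poissonSmoothing (m : ℝ) (F : ℕ → ℝ) (x : ℝ) : ℝ :=
  ∑' k : ℕ, Real.exp (-(m * x)) * (m * x) ^ k / (Nat.factorial k) * F k

lemma poissonSmoothing_eq_exp_mul_egf (m : ℝ) (F : ℕ → ℝ) (x : ℝ) :
    poissonSmoothing m F x = Real.exp (-(m * x)) * egf F (m * x) := by
  rw [egf, ← tsum_mul_left]
  exact tsum_congr fun k => by ring

section Bounded

variable {F : ℕ → ℝ} {C : ℝ}

lemma norm_mul_pow_div_factorial_le (hF : ∀ k, |F k| ≤ C) {x R : ℝ} (hxR : |x| ≤ R) (k : ℕ) :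
    ‖F k * x ^ k / (Nat.factorial k)‖ ≤ C * R ^ k / (Nat.factorial k) := by
  rw [Real.norm_eq_abs, abs_div, abs_mul, abs_pow, Nat.abs_cast]
  gcongr
  exacts [(abs_nonneg _).trans (hF 0), hF k]

lemma summable_mul_pow_div_factorial (hF : ∀ k, |F k| ≤ C) (x : ℝ) :
    Summable fun k : ℕ => F k * x ^ k / (Nat.factorial k) :=
  .of_norm_bounded ((Real.summable_pow_div_factorial |x|).mul_left C)
    fun k => (norm_mul_pow_div_factorial_le hF le_rfl k).trans_eq (mul_div_assoc _ _ _)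

lemma egf_discreteDeriv (hF : ∀ k, |F k| ≤ C) (x : ℝ) :
    egf (discreteDeriv F) x = egf (fun k => F (k + 1)) x - egf F x := by
  rw [egf, egf, egf, ← (summable_mul_pow_div_factorial (fun k => hF (k + 1)) x).tsum_sub
    (summable_mul_pow_div_factorial hF x)]
  exact tsum_congr fun k => by simp only [discreteDeriv]; ring

lemma hasDerivAt_pow_succ_div_factorial (k : ℕ) (x : ℝ) :
    HasDerivAt (fun y : ℝ => y ^ (k + 1) / (Nat.factorial (k + 1)))
      (x ^ k / (Nat.factorial k)) x := by
  refine ((hasDerivAt_pow (k + 1) x).div_const ((Nat.factorial (k + 1) : ℕ) : ℝ)).congr_deriv ?_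
  rw [Nat.factorial_succ, Nat.cast_mul, Nat.add_sub_cancel]
  field_simp

/-- Term-by-term differentiation, dominated on the ball of radius `|x| + 1` by `C Rᵏ/k!`. -/
lemma hasDerivAt_egf (hF : ∀ k, |F k| ≤ C) (x : ℝ) :
    HasDerivAt (egf F) (egf (fun k => F (k + 1)) x) x := by
  set R := |x| + 1
  have hx : x ∈ Metric.ball (0 : ℝ) R := by simp [R]
  have hbound : ∀ (k : ℕ), ∀ y ∈ Metric.ball (0 : ℝ) R,
      ‖F (k + 1) * (y ^ k / (Nat.factorial k))‖ ≤ C * R ^ k / (Nat.factorial k) := by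
    intro k y hy
    rw [← mul_div_assoc]
    have hyR : |y| ≤ R := by simpa using (Metric.mem_ball.1 hy).le
    exact norm_mul_pow_div_factorial_le (fun k => hF (k + 1)) hyR k
  have htail := hasDerivAt_tsum_of_isPreconnected
    (g := fun k y => F (k + 1) * (y ^ (k + 1) / (Nat.factorial (k + 1))))
    ((Real.summable_pow_div_factorial R).mul_left C |>.congr fun k => (mul_div_assoc _ _ _).symm)
    Metric.isOpen_ball (convex_ball 0 R).isPreconnected
    (fun k y _ => (hasDerivAt_pow_succ_div_factorial k y).const_mul (F (k + 1))) hbound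
    (Metric.mem_ball_self (by positivity)) (by simp) hx
  have hsplit : egf F =
      fun y => F 0 + ∑' k : ℕ, F (k + 1) * (y ^ (k + 1) / (Nat.factorial (k + 1))) := by
    funext y
    rw [egf, (summable_mul_pow_div_factorial hF y).tsum_eq_zero_add]
    simp only [pow_zero, Nat.factorial_zero, Nat.cast_one, div_one, mul_one, mul_div_assoc]
  rw [hsplit, egf]
  simpa only [mul_div_assoc] using htail.const_add (F 0)

lemma hasDerivAt_poissonSmoothing (m : ℝ) (hF : ∀ k, |F k| ≤ C) (x : ℝ) :
    HasDerivAt (poissonSmoothing m F) (m * poissonSmoothing m (discreteDeriv F) x) x := by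
  have hlin : HasDerivAt (fun y : ℝ => m * y) m x := by
    simpa using (hasDerivAt_id x).const_mul m
  have hprod := hlin.neg.exp.mul ((hasDerivAt_egf hF (m * x)).comp x hlin)
  rw [funext (poissonSmoothing_eq_exp_mul_egf m F)]
  refine hprod.congr_deriv ?_
  simp only [Pi.neg_apply, Function.comp_apply, poissonSmoothing_eq_exp_mul_egf,
    egf_discreteDeriv hF]
  ring

lemma iteratedDeriv_poissonSmoothing (m : ℝ) (hF : ∀ k, |F k| ≤ C) (n : ℕ) :
    iteratedDeriv n (poissonSmoothing m F) =
      fun x => m ^ n * poissonSmoothing m (discreteDeriv^[n] F) x := by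
  induction n with
  | zero => simp
  | succ n ih =>
    funext x
    rw [iteratedDeriv_succ, ih, Function.iterate_succ_apply', pow_succ, mul_assoc]
    exact ((hasDerivAt_poissonSmoothing m (abs_iterate_discreteDeriv_le hF n) x).const_mul _).deriv

lemma contDiff_poissonSmoothing (m : ℝ) (hF : ∀ k, |F k| ≤ C) {n : ℕ∞} :
    ContDiff ℝ n (poissonSmoothing m F) :=
  contDiff_of_differentiable_iteratedDeriv fun k _ => by
    rw [iteratedDeriv_poissonSmoothing m hF]
    exact fun x => ((hasDerivAt_poissonSmoothing m
      (abs_iterate_discreteDeriv_le hF k) x).const_mul _).differentiableAt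

end Bounded

end

theorem stmt4_general
    (F : ℕ → ℝ) (C : ℝ) (hF : ∀ k, |F k| ≤ C)
    (m : ℕ)
    (f : ℝ → ℝ)
    (hf : ∀ x : ℝ, f x =
      ∑' k : ℕ, Real.exp (-(m * x)) * (m * x) ^ k / (Nat.factorial k) * F k) :
    ∀ ℓ : ℕ, 1 ≤ ℓ →
      ContDiffOn ℝ ℓ f (Set.Ici 0) ∧
      ∀ x : ℝ, 0 ≤ x →
        iteratedDerivWithin ℓ f (Set.Ici 0) x =
          (m : ℝ) ^ ℓ *
            ∑' k : ℕ, Real.exp (-(m * x)) * (m * x) ^ k / (Nat.factorial k) *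
              (discreteDeriv^[ℓ] F k) := by
  obtain rfl : f = poissonSmoothing m F := funext hf
  intro ℓ _
  have hsmooth : ContDiff ℝ ℓ (poissonSmoothing m F) := contDiff_poissonSmoothing m hF
  refine ⟨hsmooth.contDiffOn, fun x hx => ?_⟩
  rw [iteratedDerivWithin_eq_iteratedDeriv (uniqueDiffOn_Ici 0) hsmooth.contDiffAt hx,
    iteratedDeriv_poissonSmoothing m hF]
  rfl

/-- Let `F : ℤ≥0 → ℝ` be bounded, `m` a positive integer, and
`f(x) := Σ_{k} e^{−mx}(mx)^k/k! · F(k)` its Poisson smoothing. Then for every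
`ℓ ≥ 1`, `f` is `ℓ`-times differentiable on `[0,∞)` and
`f^{(ℓ)}(x) = m^ℓ · Σ_k e^{−mx}(mx)^k/k! · (Δ^{(ℓ)}F)(k)` for all `x ≥ 0`. -/
theorem stmt4
    (F : ℕ → ℝ) (C : ℝ) (hF : ∀ k, |F k| ≤ C)
    (m : ℕ) (hm : 0 < m)
    (f : ℝ → ℝ)
    (hf : ∀ x : ℝ, f x =
      ∑' k : ℕ, Real.exp (-(m * x)) * (m * x) ^ k / (Nat.factorial k) * F k) :
    ∀ ℓ : ℕ, 1 ≤ ℓ →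
      ContDiffOn ℝ ℓ f (Set.Ici 0) ∧
      ∀ x : ℝ, 0 ≤ x →
        iteratedDerivWithin ℓ f (Set.Ici 0) x =
          (m : ℝ) ^ ℓ *
            ∑' k : ℕ, Real.exp (-(m * x)) * (m * x) ^ k / (Nat.factorial k) *
              (discreteDeriv^[ℓ] F k) :=
  stmt4_general F C hF m f hf
end

section
/- Let X₁, …, Xₙ be real-valued random variables that are negatively associated, let A₁, …, A_m ⊆ [n] be pairwise disjoint index sets, and for each i let 𝔣ᵢ be a stochastically increasing stochastic function (Markov kernel) from ℝ^{|Aᵢ|} to distributions on ℝ. Then the random variables Z₁, …, Z_m, where each Zᵢ is drawn from 𝔣ᵢ(X_{Aᵢ}) with the randomness of the kernels mutually independent and independent of X, are negatively associated. -/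
open MeasureTheory ProbabilityTheory Set

/-- Real-valued random variables `X 0, …, X (n-1)` are *negatively associated*
if for every pair of disjoint index sets `A₁, A₂` and every pair of bounded
measurable functions `f₁, f₂` that are coordinatewise nondecreasing and depend
only on the coordinates in `A₁` (resp. `A₂`), the covariance of `f₁(X_{A₁})`
and `f₂(X_{A₂})` is nonpositive, i.e. `E[f₁ f₂] ≤ E[f₁]·E[f₂]`. -/
def NegativelyAssociated {Ω : Type*} [MeasurableSpace Ω] (μ : Measure Ω)
    {n : ℕ} (X : Fin n → Ω → ℝ) : Prop :=
  ∀ A₁ A₂ : Finset (Fin n), Disjoint A₁ A₂ →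
    ∀ f₁ f₂ : (Fin n → ℝ) → ℝ,
      Measurable f₁ → Measurable f₂ →
      (∃ C, ∀ x, |f₁ x| ≤ C) → (∃ C, ∀ x, |f₂ x| ≤ C) →
      (∀ x y : Fin n → ℝ, (∀ i ∈ A₁, x i ≤ y i) → f₁ x ≤ f₁ y) →
      (∀ x y : Fin n → ℝ, (∀ i ∈ A₂, x i ≤ y i) → f₂ x ≤ f₂ y) →
      ∫ ω, f₁ (fun i => X i ω) * f₂ (fun i => X i ω) ∂μ ≤
        (∫ ω, f₁ (fun i => X i ω) ∂μ) * ∫ ω, f₂ (fun i => X i ω) ∂μ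

/-!
Condition on `X`: given `X = x`, the `Z i` are independent with laws `κ i x`, so for bounded
measurable `g` the conditional expectation `h x = ∫ g d(⊗ᵢ κ i x)` satisfies `E[g(Z)] = E[h(X)]`.
If `g` is nondecreasing in the coordinates `B`, then `h` is nondecreasing in the coordinates
`⋃_{i ∈ B} A i`, because each `κ i` is stochastically increasing and stochastic dominance of the
factors is inherited by the product measure (one coordinate at a time, by Fubini). For disjoint
`B₁, B₂` the product measure makes `g₁` and `g₂` independent, so the conditional expectation of
`g₁ g₂` is `h₁ h₂`; negative association of `X`, applied to `h₁, h₂` on the disjoint sets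
`⋃_{B₁} A i` and `⋃_{B₂} A i`, gives `E[g₁ g₂] ≤ E[g₁] E[g₂]`.
-/

theorem Measurable.integrable_of_abs_le {α : Type*} [MeasurableSpace α] {μ : Measure α}
    [IsFiniteMeasure μ] {f : α → ℝ} (hf : Measurable f) {C : ℝ} (h : ∀ x, |f x| ≤ C) :
    Integrable f μ :=
  .of_bound hf.aestronglyMeasurable C (.of_forall h)

theorem abs_integral_le_of_forall_abs_le {α : Type*} [MeasurableSpace α] (μ : Measure α)
    [IsProbabilityMeasure μ] {f : α → ℝ} {C : ℝ} (h : ∀ x, |f x| ≤ C) : |∫ x, f x ∂μ| ≤ C := by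
  simpa using norm_integral_le_of_norm_le_const (μ := μ) (f := f) (.of_forall h)

theorem IsUpperSet.eq_Ioi_or_Ici_sInf {α : Type*} [ConditionallyCompleteLinearOrder α]
    {U : Set α} (hU : IsUpperSet U) (hbdd : BddBelow U) (hne : U.Nonempty) :
    U = Ioi (sInf U) ∨ U = Ici (sInf U) := by
  by_cases hmem : sInf U ∈ U
  · exact Or.inr (subset_antisymm (fun x hx => csInf_le hbdd hx) (hU.Ici_subset hmem))
  · refine Or.inl (subset_antisymm (fun x hx => ?_) fun x hx => ?_)
    · exact (csInf_le hbdd hx).lt_of_ne (by rintro rfl; exact hmem hx)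
    · obtain ⟨u, hu, hux⟩ := exists_lt_of_csInf_lt hne hx
      exact hU hux.le hu

theorem IsUpperSet.eq_univ_of_not_bddBelow {α : Type*} [LinearOrder α] {U : Set α}
    (hU : IsUpperSet U) (hbdd : ¬BddBelow U) : U = univ :=
  eq_univ_of_forall fun x => by
    obtain ⟨u, hu, hux⟩ := not_bddBelow_iff.mp hbdd x
    exact hU hux.le hu

def StochasticallyLE (μ ν : Measure ℝ) : Prop :=
  ∀ t, ν (Iic t) ≤ μ (Iic t)

namespace StochasticallyLE

variable {μ ν : Measure ℝ}

theorem measure_Iio_le (h : StochasticallyLE μ ν) (s : ℝ) : ν (Iio s) ≤ μ (Iio s) := by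
  have hIio : ⋃ n : ℕ, Iic (s - 1 / (n + 1 : ℝ)) = Iio s :=
    iUnion_Iic_eq_Iio_of_lt_of_tendsto (fun n => by simp; positivity)
      (by simpa using tendsto_one_div_add_atTop_nhds_zero_nat.const_sub s)
  have hmono : Monotone fun n : ℕ => Iic (s - 1 / (n + 1 : ℝ)) := fun a b hab =>
    Iic_subset_Iic.mpr (sub_le_sub_left (Nat.one_div_le_one_div hab) s)
  rw [← hIio, hmono.measure_iUnion, hmono.measure_iUnion]
  exact iSup_mono fun n => h _

variable [IsProbabilityMeasure μ] [IsProbabilityMeasure ν]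

theorem measure_le_of_isUpperSet (h : StochasticallyLE μ ν) {U : Set ℝ} (hU : IsUpperSet U) :
    μ U ≤ ν U := by
  rcases U.eq_empty_or_nonempty with rfl | hne
  · simp
  by_cases hbdd : BddBelow U
  · rcases hU.eq_Ioi_or_Ici_sInf hbdd hne with hUeq | hUeq <;> rw [hUeq]
    · rw [← compl_Iic, prob_compl_eq_one_sub measurableSet_Iic,
        prob_compl_eq_one_sub measurableSet_Iic]
      exact tsub_le_tsub_left (h _) 1
    · rw [← compl_Iio, prob_compl_eq_one_sub measurableSet_Iio,
        prob_compl_eq_one_sub measurableSet_Iio]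
      exact tsub_le_tsub_left (h.measure_Iio_le _) 1
  · simp [hU.eq_univ_of_not_bddBelow hbdd]

theorem integral_le_of_monotone (h : StochasticallyLE μ ν) {f : ℝ → ℝ} (hf : Measurable f)
    (hmono : Monotone f) {C : ℝ} (hC : ∀ x, |f x| ≤ C) : ∫ x, f x ∂μ ≤ ∫ x, f x ∂ν := by
  -- layer cake formula for the nonnegative shift `f + C`
  suffices ∫ x, f x + C ∂μ ≤ ∫ x, f x + C ∂ν by
    simpa [integral_add (hf.integrable_of_abs_le hC) (integrable_const C),
      integral_add (hf.integrable_of_abs_le hC) (integrable_const C)] using this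
  have hF : Measurable fun x => f x + C := hf.add_const C
  have hF_nonneg : ∀ x, 0 ≤ f x + C := fun x => by linarith [(abs_le.mp (hC x)).1]
  rw [integral_eq_lintegral_of_nonneg_ae (.of_forall hF_nonneg) hF.aestronglyMeasurable,
    integral_eq_lintegral_of_nonneg_ae (.of_forall hF_nonneg) hF.aestronglyMeasurable]
  refine ENNReal.toReal_mono
    ((hf.integrable_of_abs_le hC).add (integrable_const C)).lintegral_lt_top.ne ?_
  rw [lintegral_eq_lintegral_meas_lt μ (.of_forall hF_nonneg) hF.aemeasurable,
    lintegral_eq_lintegral_meas_lt ν (.of_forall hF_nonneg) hF.aemeasurable]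
  exact lintegral_mono fun t => h.measure_le_of_isUpperSet fun a b hab ha =>
    ha.trans_le (add_le_add_left (hmono hab) C)

end StochasticallyLE

theorem integral_pi_fin_succ {m : ℕ} {β : Type*} [MeasurableSpace β]
    (ρ : Fin (m + 1) → Measure β) [∀ i, SigmaFinite (ρ i)] {g : (Fin (m + 1) → β) → ℝ}
    (hg : Integrable g (Measure.pi ρ)) :
    ∫ z, g z ∂Measure.pi ρ = ∫ t, ∫ v, g (Fin.cons t v) ∂Measure.pi (fun j => ρ j.succ) ∂ρ 0 := by
  set e := (MeasurableEquiv.piFinSuccAbove (fun _ => β) 0).symm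
  have he : ∀ p, e p = Fin.cons p.1 p.2 := fun p => by
    simp [e, MeasurableEquiv.piFinSuccAbove_symm_apply, Fin.insertNthEquiv, Fin.insertNth_zero']
  have hpres : MeasurePreserving e ((ρ 0).prod (Measure.pi fun j => ρ j.succ)) (Measure.pi ρ) :=
    (measurePreserving_piFinSuccAbove ρ 0).symm
  have hint : Integrable (fun p => g (e p)) ((ρ 0).prod (Measure.pi fun j => ρ j.succ)) :=
    (hpres.integrable_comp_emb e.measurableEmbedding).mpr hg
  rw [← hpres.integral_comp', integral_prod _ hint]
  simp only [he]

theorem measurable_finCons {m : ℕ} {β : Type*} [MeasurableSpace β] :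
    Measurable fun p : β × (Fin m → β) => (Fin.cons p.1 p.2 : Fin (m + 1) → β) :=
  measurable_pi_iff.mpr fun i => Fin.cases measurable_fst
    (fun j => (measurable_pi_apply j).comp measurable_snd) i

def MonotoneIn {ι : Type*} (S : Set ι) (f : (ι → ℝ) → ℝ) : Prop :=
  ∀ x y : ι → ℝ, (∀ i ∈ S, x i ≤ y i) → f x ≤ f y

theorem MonotoneIn.dependsOn {ι : Type*} {S : Set ι} {f : (ι → ℝ) → ℝ} (hf : MonotoneIn S f) :
    DependsOn f S := fun x y h =>
  (hf x y fun i hi => (h i hi).le).antisymm (hf y x fun i hi => (h i hi).ge)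

namespace MonotoneIn

variable {m : ℕ} {S : Set (Fin (m + 1))} {f : (Fin (m + 1) → ℝ) → ℝ}

theorem comp_finCons (hf : MonotoneIn S f) (t : ℝ) :
    MonotoneIn (Fin.succ ⁻¹' S) fun v => f (Fin.cons t v) := fun v w hvw =>
  hf _ _ fun i hi => by
    induction i using Fin.cases with
    | zero => exact le_rfl
    | succ j => exact hvw j hi

theorem finCons_le (hf : MonotoneIn S f) {t t' : ℝ} (htt' : 0 ∈ S → t ≤ t') (v : Fin m → ℝ) :
    f (Fin.cons t v) ≤ f (Fin.cons t' v) :=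
  hf _ _ fun i hi => by
    induction i using Fin.cases with
    | zero => exact htt' hi
    | succ j => exact le_rfl

end MonotoneIn

theorem integral_pi_le_of_stochasticallyLE {m : ℕ} {S : Set (Fin m)}
    (σ τ : Fin m → Measure ℝ) [∀ i, IsProbabilityMeasure (σ i)] [∀ i, IsProbabilityMeasure (τ i)]
    (hστ : ∀ i ∈ S, StochasticallyLE (σ i) (τ i)) {g : (Fin m → ℝ) → ℝ} (hg : Measurable g)
    {C : ℝ} (hC : ∀ z, |g z| ≤ C) (hmono : MonotoneIn S g) :
    ∫ z, g z ∂Measure.pi σ ≤ ∫ z, g z ∂Measure.pi τ := by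
  induction m with
  | zero => simp [integral_unique]
  | succ m ih =>
    rw [integral_pi_fin_succ σ (hg.integrable_of_abs_le hC),
      integral_pi_fin_succ τ (hg.integrable_of_abs_le hC)]
    have hg_cons : ∀ t, Measurable fun v => g (Fin.cons t v) := fun t =>
      hg.comp measurable_finCons.of_uncurry_left
    set G : (Fin m → Measure ℝ) → ℝ → ℝ := fun ρ t => ∫ v, g (Fin.cons t v) ∂Measure.pi ρ
    have hG_meas : ∀ ρ : Fin m → Measure ℝ, [∀ i, IsProbabilityMeasure (ρ i)] →
        Measurable (G ρ) := fun ρ _ =>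
      (hg.comp measurable_finCons).stronglyMeasurable.integral_prod_right'.measurable
    have hG_bound : ∀ ρ : Fin m → Measure ℝ, [∀ i, IsProbabilityMeasure (ρ i)] →
        ∀ t, |G ρ t| ≤ C := fun ρ _ t =>
      abs_integral_le_of_forall_abs_le _ fun _ => hC _
    set σ' : Fin m → Measure ℝ := fun j => σ j.succ
    set τ' : Fin m → Measure ℝ := fun j => τ j.succ
    have hG_mono : ∀ {t t'}, (0 ∈ S → t ≤ t') → G τ' t ≤ G τ' t' := fun htt' =>
      integral_mono ((hg_cons _).integrable_of_abs_le fun _ => hC _)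
        ((hg_cons _).integrable_of_abs_le fun _ => hC _) (hmono.finCons_le htt')
    calc ∫ t, G σ' t ∂σ 0 ≤ ∫ t, G τ' t ∂σ 0 :=
          integral_mono ((hG_meas σ').integrable_of_abs_le (hG_bound σ'))
            ((hG_meas τ').integrable_of_abs_le (hG_bound τ')) fun t =>
              ih σ' τ' (fun j hj => hστ _ hj) (hg_cons t) (fun _ => hC _) (hmono.comp_finCons t)
      _ ≤ ∫ t, G τ' t ∂τ 0 := by
        by_cases h0 : 0 ∈ S
        · exact (hστ 0 h0).integral_le_of_monotone (hG_meas τ')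
            (fun t t' htt' => hG_mono fun _ => htt') (hG_bound τ')
        · have hconst : ∀ t, G τ' t = G τ' 0 := fun t =>
            (hG_mono (absurd · h0)).antisymm (hG_mono (absurd · h0))
          simp [hconst]

theorem DependsOn.eq_comp_restrict {ι β : Type*} [DecidableEq ι] {α : ι → Type*}
    {f : (∀ i, α i) → β} {S : Finset ι} (hf : DependsOn f S) (z₀ : ∀ i, α i) :
    f = (fun u => f (Function.updateFinset z₀ S u)) ∘ S.restrict :=
  funext fun z => hf fun i hi => by simp [Function.updateFinset, Finset.mem_coe.mp hi]

theorem integral_mul_pi_eq_of_dependsOn {ι : Type*} [Fintype ι] {α : ι → Type*}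
    [∀ i, MeasurableSpace (α i)] (σ : ∀ i, Measure (α i)) [∀ i, IsProbabilityMeasure (σ i)]
    {S T : Finset ι} (hST : Disjoint S T) {f g : (∀ i, α i) → ℝ} (hf : Measurable f)
    (hg : Measurable g) (hfS : DependsOn f S) (hgT : DependsOn g T) :
    ∫ z, f z * g z ∂Measure.pi σ = (∫ z, f z ∂Measure.pi σ) * ∫ z, g z ∂Measure.pi σ := by
  classical
  obtain ⟨z₀⟩ := nonempty_of_isProbabilityMeasure (Measure.pi σ)
  have hindep : IndepFun f g (Measure.pi σ) := by
    rw [hfS.eq_comp_restrict z₀, hgT.eq_comp_restrict z₀]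
    exact ((iIndepFun_pi (X := fun _ => id) fun _ => aemeasurable_id).indepFun_finset S T hST
      measurable_pi_apply).comp (hf.comp measurable_updateFinset) (hg.comp measurable_updateFinset)
  exact hindep.integral_fun_mul_eq_mul_integral hf.aestronglyMeasurable hg.aestronglyMeasurable

namespace ProbabilityTheory.Kernel

variable {α ι : Type*} [MeasurableSpace α] [Fintype ι] {β : ι → Type*}
  [∀ i, MeasurableSpace (β i)]

noncomputable def pi (κ : ∀ i, Kernel α (β i)) [∀ i, IsMarkovKernel (κ i)] :
    Kernel α (∀ i, β i) where
  toFun x := Measure.pi fun i => κ i x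
  measurable' := .measure_of_isPiSystem_of_isProbabilityMeasure generateFrom_pi.symm isPiSystem_pi
    (by
      rintro _ ⟨B, hB, rfl⟩
      simp_rw [Measure.pi_pi]
      exact Finset.measurable_prod _ fun i _ => (κ i).measurable_coe (hB i (mem_univ i)))

variable (κ : ∀ i, Kernel α (β i)) [∀ i, IsMarkovKernel (κ i)]

theorem pi_apply (x : α) : pi κ x = Measure.pi fun i => κ i x := rfl

instance : IsMarkovKernel (pi κ) :=
  ⟨fun x => by rw [pi_apply]; infer_instance⟩

end ProbabilityTheory.Kernel

theorem map_prodMk_eq_compProd_kernelPi {Ω α ι : Type*} [MeasurableSpace Ω] [MeasurableSpace α]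
    [Fintype ι] {β : ι → Type*} [∀ i, MeasurableSpace (β i)] (μ : Measure Ω) [IsFiniteMeasure μ]
    {V : Ω → α} {W : Ω → ∀ i, β i} (hV : Measurable V) (hW : Measurable W)
    (κ : ∀ i, Kernel α (β i)) [∀ i, IsMarkovKernel (κ i)]
    (hlaw : ∀ (C : Set α) (B : ∀ i, Set (β i)), MeasurableSet C → (∀ i, MeasurableSet (B i)) →
      μ {ω | V ω ∈ C ∧ ∀ i, W ω i ∈ B i} = ∫⁻ x in C, ∏ i, κ i x (B i) ∂μ.map V) :
    μ.map (fun ω => (V ω, W ω)) = μ.map V ⊗ₘ Kernel.pi κ := by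
  refine ext_of_generate_finite
    (image2 (· ×ˢ ·) {C : Set α | MeasurableSet C}
      (pi univ '' pi univ fun i => {B : Set (β i) | MeasurableSet B}))
    (generateFrom_eq_prod MeasurableSpace.generateFrom_measurableSet generateFrom_pi
      isCountablySpanning_measurableSet
      (.pi fun _ => isCountablySpanning_measurableSet)).symm
    (.prod MeasurableSpace.isPiSystem_measurableSet isPiSystem_pi) ?_
    (by rw [Measure.compProd_apply_univ, Measure.map_apply (hV.prodMk hW) .univ,
      Measure.map_apply hV .univ]; rfl)
  rintro _ ⟨C, hC, _, ⟨B, hB, rfl⟩, rfl⟩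
  have hB' : ∀ i, MeasurableSet (B i) := fun i => hB i (mem_univ i)
  rw [Measure.map_apply (hV.prodMk hW) (hC.prod (.univ_pi hB')),
    Measure.compProd_apply_prod hC (.univ_pi hB')]
  simp_rw [Kernel.pi_apply, Measure.pi_pi]
  convert hlaw C B hC hB' using 2
  ext ω
  simp [Set.mem_pi]

theorem integral_comp_eq_integral_kernel_of_map_eq_compProd {Ω α β : Type*} [MeasurableSpace Ω]
    [MeasurableSpace α] [MeasurableSpace β] (μ : Measure Ω) [IsFiniteMeasure μ]
    {V : Ω → α} {W : Ω → β} (hV : Measurable V) (hW : Measurable W) (K : Kernel α β)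
    [IsMarkovKernel K] (hlaw : μ.map (fun ω => (V ω, W ω)) = μ.map V ⊗ₘ K) {G : β → ℝ}
    (hG : Measurable G) {C : ℝ} (hC : ∀ z, |G z| ≤ C) :
    ∫ ω, G (W ω) ∂μ = ∫ ω, ∫ z, G z ∂K (V ω) ∂μ := by
  have hG_snd : Measurable fun p : α × β => G p.2 := hG.comp measurable_snd
  calc ∫ ω, G (W ω) ∂μ = ∫ p, G p.2 ∂μ.map (fun ω => (V ω, W ω)) :=
        (integral_map (hV.prodMk hW).aemeasurable hG_snd.aestronglyMeasurable).symm
    _ = ∫ x, ∫ z, G z ∂K x ∂μ.map V := by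
        rw [hlaw, Measure.integral_compProd (hG_snd.integrable_of_abs_le fun p => hC p.2)]
    _ = ∫ ω, ∫ z, G z ∂K (V ω) ∂μ :=
        integral_map hV.aemeasurable
          hG_snd.stronglyMeasurable.integral_kernel_prod_right'.aestronglyMeasurable

theorem monotoneIn_integral_kernelPi {ι : Type*} {m : ℕ}
    (κ : Fin m → Kernel (ι → ℝ) ℝ) [∀ i, IsMarkovKernel (κ i)] (A : Fin m → Set ι)
    (hκ : ∀ i x y, (∀ j ∈ A i, x j ≤ y j) → StochasticallyLE (κ i x) (κ i y))
    {B : Set (Fin m)} {g : (Fin m → ℝ) → ℝ} (hg : Measurable g) {C : ℝ} (hC : ∀ z, |g z| ≤ C)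
    (hmono : MonotoneIn B g) :
    MonotoneIn (⋃ i ∈ B, A i) fun x => ∫ z, g z ∂Kernel.pi κ x := fun x y hxy =>
  integral_pi_le_of_stochasticallyLE _ _
    (fun i hi => hκ i x y fun j hj => hxy j (mem_biUnion hi hj)) hg hC hmono

theorem Finset.disjoint_biUnion_of_pairwiseDisjoint {ι α : Type*} [DecidableEq α]
    {A : ι → Finset α} (hA : Pairwise (Function.onFun Disjoint A)) {B₁ B₂ : Finset ι}
    (hB : Disjoint B₁ B₂) : Disjoint (B₁.biUnion A) (B₂.biUnion A) :=
  disjoint_biUnion_left _ _ _ |>.mpr fun _ hi => disjoint_biUnion_right _ _ _ |>.mpr fun _ hj =>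
    hA fun hij => disjoint_left.mp hB hi (hij ▸ hj)

/-- Let `X₁, …, Xₙ` be negatively associated, `A₁, …, A_m`
pairwise disjoint index sets, and for each `i` let `κ i` be a stochastically
increasing Markov kernel depending only on the coordinates in `A i`. If
`Z₁, …, Z_m` are sampled with `Z i ~ κ i (X_{A i})`, with the kernel
randomness mutually independent and independent of `X` (expressed by the
product formula for the joint law), then `Z₁, …, Z_m` are negatively
associated. -/
theorem stmt9
    {Ω : Type*} [MeasurableSpace Ω] (μ : Measure Ω) [IsProbabilityMeasure μ]
    {n m : ℕ}
    (X : Fin n → Ω → ℝ) (hXm : ∀ i, Measurable (X i))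
    (hNA : NegativelyAssociated μ X)
    (A : Fin m → Finset (Fin n))
    (hdisj : ∀ i j, i ≠ j → Disjoint (A i) (A j))
    (κ : Fin m → Kernel (Fin n → ℝ) ℝ)
    (hκ : ∀ i, IsMarkovKernel (κ i))
    (hmono : ∀ (i : Fin m) (x y : Fin n → ℝ), (∀ j ∈ A i, x j ≤ y j) →
      ∀ t : ℝ, (κ i) y (Set.Iic t) ≤ (κ i) x (Set.Iic t))
    (Z : Fin m → Ω → ℝ) (hZm : ∀ i, Measurable (Z i))
    (hjoint : ∀ (C : Set (Fin n → ℝ)) (B : Fin m → Set ℝ),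
      MeasurableSet C → (∀ i, MeasurableSet (B i)) →
      μ {ω | (fun i => X i ω) ∈ C ∧ ∀ i, Z i ω ∈ B i}
        = ∫⁻ x in C, ∏ i, (κ i) x (B i)
            ∂(Measure.map (fun ω (i : Fin n) => X i ω) μ)) :
    NegativelyAssociated μ Z := by
  intro B₁ B₂ hB g₁ g₂ hg₁ hg₂ ⟨C₁, hC₁⟩ ⟨C₂, hC₂⟩ hm₁ hm₂
  set K := Kernel.pi κ
  have hV : Measurable fun ω i => X i ω := measurable_pi_lambda _ hXm
  have hW : Measurable fun ω i => Z i ω := measurable_pi_lambda _ hZm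
  have hcond : ∀ {G : (Fin m → ℝ) → ℝ}, Measurable G → ∀ {C}, (∀ z, |G z| ≤ C) →
      ∫ ω, G (fun i => Z i ω) ∂μ = ∫ ω, ∫ z, G z ∂K (fun i => X i ω) ∂μ := fun hG _ hC =>
    integral_comp_eq_integral_kernel_of_map_eq_compProd μ hV hW K
      (map_prodMk_eq_compProd_kernelPi μ hV hW κ hjoint) hG hC
  have hC₁₂ : ∀ z, |g₁ z * g₂ z| ≤ C₁ * C₂ := fun z => by
    rw [abs_mul]; exact mul_le_mul (hC₁ z) (hC₂ z) (abs_nonneg _) ((abs_nonneg _).trans (hC₁ z))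
  have hfactor : ∀ x, ∫ z, g₁ z * g₂ z ∂K x = (∫ z, g₁ z ∂K x) * ∫ z, g₂ z ∂K x := fun x =>
    integral_mul_pi_eq_of_dependsOn _ hB hg₁ hg₂ (MonotoneIn.dependsOn hm₁)
      (MonotoneIn.dependsOn hm₂)
  have hmono_cond : ∀ {B : Finset (Fin m)} {g : (Fin m → ℝ) → ℝ}, Measurable g →
      ∀ {C}, (∀ z, |g z| ≤ C) → MonotoneIn B g → MonotoneIn ↑(B.biUnion A) fun x => ∫ z, g z ∂K x :=
    fun hg _ hC hm => by
      rw [Finset.coe_biUnion]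
      exact monotoneIn_integral_kernelPi κ (fun i => A i) hmono hg hC hm
  rw [hcond (G := fun z => g₁ z * g₂ z) (hg₁.mul hg₂) hC₁₂, hcond hg₁ hC₁, hcond hg₂ hC₂]
  simp_rw [hfactor]
  exact hNA _ _ (Finset.disjoint_biUnion_of_pairwiseDisjoint (fun i j => hdisj i j) hB) _ _
    (hg₁.comp measurable_snd).stronglyMeasurable.integral_kernel_prod_right'.measurable
    (hg₂.comp measurable_snd).stronglyMeasurable.integral_kernel_prod_right'.measurable
    ⟨C₁, fun x => abs_integral_le_of_forall_abs_le _ hC₁⟩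
    ⟨C₂, fun x => abs_integral_le_of_forall_abs_le _ hC₂⟩
    (hmono_cond hg₁ hC₁ hm₁) (hmono_cond hg₂ hC₂ hm₂)
end

section
/- Let X₁, …, Xₙ be real-valued random variables that are negatively associated, let A₁, …, A_m ⊆ [n] be pairwise disjoint index sets, and for each i let 𝔣ᵢ be a stochastically increasing stochastic function (Markov kernel) from ℝ^{|Aᵢ|} to distributions on [0,∞), with the kernel randomness mutually independent and independent of X. Then E[ Πᵢ 𝔣ᵢ(X_{Aᵢ}) ] ≤ Πᵢ E[ 𝔣ᵢ(X_{Aᵢ}) ]. -/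
/-!
Negative association extends from two to finitely many nonnegative bounded functions that are
increasing in disjoint blocks of coordinates. Since `κ i` is stochastically increasing, the tail
probabilities `x ↦ κ i x (Ioi tᵢ)` are such functions, and the joint law of `(X, Z)` turns the
extended inequality into the survival inequality `P(∀ i, tᵢ < Zᵢ) ≤ ∏ i, P(tᵢ < Zᵢ)`.
Integrating it over `t ∈ (0, ∞)ᵐ` gives `E[∏ i, Zᵢ] ≤ ∏ i, E[Zᵢ]` by the layer-cake formula
`∏ i, zᵢ = vol {t ∈ (0, ∞)ᵐ | ∀ i, tᵢ < zᵢ}`.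
-/

open MeasureTheory ProbabilityTheory Set

open scoped ENNReal

namespace MeasureTheory

theorem lintegral_fin_nat_prod_eq_prod {n : ℕ} {E : Type*} [MeasurableSpace E]
    {μ : Fin n → Measure E} [∀ i, SigmaFinite (μ i)]
    {f : Fin n → E → ℝ≥0∞} (hf : ∀ i, Measurable (f i)) :
    ∫⁻ x, ∏ i, f i (x i) ∂(Measure.pi μ) = ∏ i, ∫⁻ x, f i x ∂(μ i) := by
  induction n with
  | zero => simp
  | succ n ih =>
      calc
        _ = ∫⁻ x : E × (Fin n → E), f 0 x.1 * ∏ i : Fin n, f i.succ (x.2 i)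
            ∂((μ 0).prod (Measure.pi fun i ↦ μ i.succ)) := by
          rw [← ((measurePreserving_piFinSuccAbove μ 0).symm).lintegral_comp_emb
            (MeasurableEquiv.measurableEmbedding _)]
          simp_rw [MeasurableEquiv.piFinSuccAbove_symm_apply, Fin.insertNthEquiv,
            Fin.prod_univ_succ, Fin.insertNth_zero, Equiv.coe_fn_mk, Fin.cons_succ,
            Fin.zero_succAbove, Fin.cons_zero, cast_eq]
        _ = (∫⁻ x, f 0 x ∂μ 0) * ∏ i : Fin n, ∫⁻ x, f i.succ x ∂(μ i.succ) := by
          rw [← ih fun i ↦ hf i.succ]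
          exact lintegral_prod_mul (hf 0).aemeasurable
            (Finset.measurable_prod _ fun (i : Fin n) _ ↦
              (hf i.succ).comp (measurable_pi_apply i)).aemeasurable
        _ = ∏ i, ∫⁻ x, f i x ∂(μ i) := (Fin.prod_univ_succ fun i ↦ ∫⁻ x, f i x ∂(μ i)).symm

theorem lintegral_fintype_prod_eq_prod {ι : Type*} [Fintype ι] {E : Type*} [MeasurableSpace E]
    {μ : ι → Measure E} [∀ i, SigmaFinite (μ i)]
    {f : ι → E → ℝ≥0∞} (hf : ∀ i, Measurable (f i)) :
    ∫⁻ x, ∏ i, f i (x i) ∂(Measure.pi μ) = ∏ i, ∫⁻ x, f i x ∂(μ i) := by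
  let e := (Fintype.equivFin ι).symm
  rw [← (measurePreserving_piCongrLeft μ e).lintegral_comp_emb
    (MeasurableEquiv.measurableEmbedding _)]
  simp_rw [← e.prod_comp, MeasurableEquiv.coe_piCongrLeft, Equiv.piCongrLeft_apply_apply]
  exact lintegral_fin_nat_prod_eq_prod fun i ↦ hf (e i)

variable {ι Ω : Type*} [Fintype ι] [MeasurableSpace Ω] {μ : Measure Ω} [SFinite μ]
  {f : ι → Ω → ℝ}

theorem lintegral_prod_ofReal_eq_lintegral_measure_forall_lt (hf : ∀ i, Measurable (f i)) :
    ∫⁻ ω, ∏ i, ENNReal.ofReal (f i ω) ∂μ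
      = ∫⁻ t, μ {ω | ∀ i, t i < f i ω} ∂(Measure.pi fun _ ↦ volume.restrict (Ioi 0)) := by
  set π := Measure.pi fun _ : ι ↦ (volume : Measure ℝ).restrict (Ioi 0)
  set S : Set (Ω × (ι → ℝ)) := {p | ∀ i, p.2 i < f i p.1}
  have hS : MeasurableSet S := by
    simp only [S, ofPred_forall]
    exact .iInter fun i ↦ measurableSet_lt (by fun_prop) ((hf i).comp measurable_fst)
  have hslice (ω : Ω) : ∏ i, ENNReal.ofReal (f i ω) = π (Prod.mk ω ⁻¹' S) := by
    have : Prod.mk ω ⁻¹' S = univ.pi fun i ↦ Iio (f i ω) := by ext; simp [S]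
    rw [this, Measure.pi_pi]
    refine Finset.prod_congr rfl fun i _ ↦ ?_
    rw [Measure.restrict_apply measurableSet_Iio, Iio_inter_Ioi, Real.volume_Ioo, sub_zero]
  calc ∫⁻ ω, ∏ i, ENNReal.ofReal (f i ω) ∂μ = ∫⁻ ω, π (Prod.mk ω ⁻¹' S) ∂μ := by
        simp_rw [hslice]
    _ = μ.prod π S := (Measure.prod_apply hS).symm
    _ = ∫⁻ t, μ ((·, t) ⁻¹' S) ∂π := Measure.prod_apply_symm hS

theorem lintegral_prod_ofReal_le_prod_of_measure_forall_lt_le (hf : ∀ i, Measurable (f i))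
    (hf0 : ∀ i, 0 ≤ᵐ[μ] f i)
    (h : ∀ t : ι → ℝ, μ {ω | ∀ i, t i < f i ω} ≤ ∏ i, μ {ω | t i < f i ω}) :
    ∫⁻ ω, ∏ i, ENNReal.ofReal (f i ω) ∂μ ≤ ∏ i, ∫⁻ ω, ENNReal.ofReal (f i ω) ∂μ := by
  have hmeas (i : ι) : Measurable fun s : ℝ ↦ μ {ω | s < f i ω} :=
    Antitone.measurable fun s s' hss' ↦ measure_mono fun ω hω ↦ hss'.trans_lt hω
  calc _ = ∫⁻ t, μ {ω | ∀ i, t i < f i ω} ∂(Measure.pi fun _ ↦ volume.restrict (Ioi 0)) :=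
        lintegral_prod_ofReal_eq_lintegral_measure_forall_lt hf
    _ ≤ ∫⁻ t, ∏ i, μ {ω | t i < f i ω} ∂(Measure.pi fun _ ↦ volume.restrict (Ioi 0)) :=
        lintegral_mono h
    _ = ∏ i, ∫⁻ s in Ioi 0, μ {ω | s < f i ω} := lintegral_fintype_prod_eq_prod hmeas
    _ = _ := by simp_rw [lintegral_eq_lintegral_meas_lt μ (hf0 _) (hf _).aemeasurable]

theorem integral_prod_le_prod_integral_of_measure_forall_lt_le (hf : ∀ i, Measurable (f i))
    (hf0 : ∀ i, 0 ≤ᵐ[μ] f i) (hfi : ∀ i, Integrable (f i) μ)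
    (h : ∀ t : ι → ℝ, μ {ω | ∀ i, t i < f i ω} ≤ ∏ i, μ {ω | t i < f i ω}) :
    ∫ ω, ∏ i, f i ω ∂μ ≤ ∏ i, ∫ ω, f i ω ∂μ := by
  have hall : ∀ᵐ ω ∂μ, ∀ i, 0 ≤ f i ω := ae_all_iff.2 hf0
  have hprod0 : 0 ≤ᵐ[μ] fun ω ↦ ∏ i, f i ω := by
    filter_upwards [hall] with ω hω using Finset.prod_nonneg fun i _ ↦ hω i
  rw [integral_eq_lintegral_of_nonneg_ae hprod0
    (Finset.measurable_prod _ fun i _ ↦ hf i).aestronglyMeasurable]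
  simp_rw [integral_eq_lintegral_of_nonneg_ae (hf0 _) (hf _).aestronglyMeasurable,
    ← ENNReal.toReal_prod]
  refine ENNReal.toReal_mono (ENNReal.prod_ne_top fun i _ ↦ (hfi i).lintegral_lt_top.ne) ?_
  calc ∫⁻ ω, ENNReal.ofReal (∏ i, f i ω) ∂μ = ∫⁻ ω, ∏ i, ENNReal.ofReal (f i ω) ∂μ :=
        lintegral_congr_ae <| by
          filter_upwards [hall] with ω hω using ENNReal.ofReal_prod_of_nonneg fun i _ ↦ hω i
    _ ≤ _ := lintegral_prod_ofReal_le_prod_of_measure_forall_lt_le hf hf0 h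

end MeasureTheory

open Function

namespace NegativelyAssociated

variable {Ω : Type*} [MeasurableSpace Ω] {μ : Measure Ω} [IsProbabilityMeasure μ] {n : ℕ}
  {X : Fin n → Ω → ℝ} {ι : Type*} {A : ι → Finset (Fin n)}

theorem integral_prod_le_prod_integral (hNA : NegativelyAssociated μ X)
    (hA : Pairwise (Disjoint on A)) {f : ι → (Fin n → ℝ) → ℝ} (hf : ∀ i, Measurable (f i))
    (hf0 : ∀ i x, 0 ≤ f i x) (hfC : ∀ i, ∃ C, ∀ x, f i x ≤ C)
    (hf_mono : ∀ i x y, (∀ j ∈ A i, x j ≤ y j) → f i x ≤ f i y) (s : Finset ι) :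
    ∫ ω, ∏ i ∈ s, f i (fun j ↦ X j ω) ∂μ ≤ ∏ i ∈ s, ∫ ω, f i (fun j ↦ X j ω) ∂μ := by
  classical
  choose C hC using hfC
  induction s using Finset.induction_on with
  | empty => simp
  | insert a s ha ih =>
    have hdisj : Disjoint (A a) (s.biUnion A) :=
      (Finset.disjoint_biUnion_right _ _ _).2 fun i hi ↦ hA fun h ↦ ha (h ▸ hi)
    have hcov := hNA (A a) (s.biUnion A) hdisj (f a) (fun x ↦ ∏ i ∈ s, f i x) (hf a)
      (Finset.measurable_prod _ fun i _ ↦ hf i)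
      ⟨C a, fun x ↦ (abs_of_nonneg (hf0 a x)).trans_le (hC a x)⟩
      ⟨∏ i ∈ s, C i, fun x ↦ (abs_of_nonneg (Finset.prod_nonneg fun i _ ↦ hf0 i x)).trans_le
        (Finset.prod_le_prod (fun i _ ↦ hf0 i x) fun i _ ↦ hC i x)⟩
      (hf_mono a) fun x y hxy ↦ Finset.prod_le_prod (fun i _ ↦ hf0 i x) fun i hi ↦
        hf_mono i x y fun j hj ↦ hxy j (Finset.mem_biUnion.2 ⟨i, hi, hj⟩)
    simp only [Finset.prod_insert ha]
    exact hcov.trans (mul_le_mul_of_nonneg_left ih (integral_nonneg fun ω ↦ hf0 a _))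

theorem lintegral_prod_le_prod_lintegral_map [Fintype ι] (hNA : NegativelyAssociated μ X)
    (hX : ∀ i, Measurable (X i)) (hA : Pairwise (Disjoint on A))
    {h : ι → (Fin n → ℝ) → ℝ≥0∞} (hh : ∀ i, Measurable (h i)) (hh1 : ∀ i x, h i x ≤ 1)
    (hh_mono : ∀ i x y, (∀ j ∈ A i, x j ≤ y j) → h i x ≤ h i y) :
    ∫⁻ x, ∏ i, h i x ∂(μ.map fun ω j ↦ X j ω) ≤ ∏ i, ∫⁻ x, h i x ∂(μ.map fun ω j ↦ X j ω) := by
  set ν := μ.map fun ω j ↦ X j ω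
  have hXm : Measurable fun ω j ↦ X j ω := measurable_pi_lambda _ hX
  have hlintegral_eq {g : (Fin n → ℝ) → ℝ≥0∞} (hg : Measurable g) (hg1 : ∀ x, g x ≤ 1) :
      ∫⁻ x, g x ∂ν = ENNReal.ofReal (∫ ω, (g fun j ↦ X j ω).toReal ∂μ) := by
    have : IsProbabilityMeasure ν := Measure.isProbabilityMeasure_map hXm.aemeasurable
    rw [← integral_map hXm.aemeasurable hg.ennreal_toReal.aestronglyMeasurable,
      integral_toReal hg.aemeasurable (ae_of_all _ fun x ↦ (hg1 x).trans_lt ENNReal.one_lt_top),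
      ENNReal.ofReal_toReal ((lintegral_mono hg1).trans_lt (by simp)).ne]
  rw [hlintegral_eq (Finset.measurable_prod _ fun i _ ↦ hh i)
      fun x ↦ Finset.prod_le_one' fun i _ ↦ hh1 i x,
    Finset.prod_congr rfl fun i _ ↦ hlintegral_eq (hh i) (hh1 i),
    ← ENNReal.ofReal_prod_of_nonneg fun i _ ↦ integral_nonneg fun ω ↦ ENNReal.toReal_nonneg]
  simp only [ENNReal.toReal_prod]
  refine ENNReal.ofReal_le_ofReal <| hNA.integral_prod_le_prod_integral hA
    (fun i ↦ (hh i).ennreal_toReal) (fun _ _ ↦ ENNReal.toReal_nonneg)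
    (fun i ↦ ⟨1, fun x ↦ ENNReal.toReal_le_of_le_ofReal zero_le_one (by simpa using hh1 i x)⟩)
    (fun i x y hxy ↦ ENNReal.toReal_mono ((hh1 i y).trans_lt ENNReal.one_lt_top).ne
      (hh_mono i x y hxy)) Finset.univ

end NegativelyAssociated

theorem measure_Ioi_le_of_measure_Iic_le {ν₁ ν₂ : Measure ℝ} [IsProbabilityMeasure ν₁]
    [IsProbabilityMeasure ν₂] {t : ℝ} (h : ν₂ (Iic t) ≤ ν₁ (Iic t)) :
    ν₁ (Ioi t) ≤ ν₂ (Ioi t) := by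
  rw [← compl_Iic, prob_compl_eq_one_sub measurableSet_Iic, prob_compl_eq_one_sub measurableSet_Iic]
  exact tsub_le_tsub_left h 1

theorem measure_preimage_eq_lintegral_of_measure_forall_mem_eq {α β : Type*}
    [MeasurableSpace α] [MeasurableSpace β] {Ω ι : Type*} [MeasurableSpace Ω] [Fintype ι]
    {μ : Measure Ω} {ν : Measure α} {κ : ι → Kernel α β} [∀ i, IsMarkovKernel (κ i)]
    {Z : ι → Ω → β}
    (h : ∀ B : ι → Set β, (∀ i, MeasurableSet (B i)) →
      μ {ω | ∀ i, Z i ω ∈ B i} = ∫⁻ x, ∏ i, κ i x (B i) ∂ν)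
    (i : ι) {B : Set β} (hB : MeasurableSet B) :
    μ (Z i ⁻¹' B) = ∫⁻ x, κ i x B ∂ν := by
  classical
  have hBi := h (Function.update (fun _ ↦ univ) i B) fun j ↦ by
    rcases eq_or_ne j i with rfl | hj <;> simp [*]
  convert hBi using 2
  · ext ω
    refine ⟨fun hω j ↦ ?_, fun hω ↦ by simpa using hω i⟩
    rcases eq_or_ne j i with rfl | hj
    · simpa using hω
    · simp [hj]
  · ext x
    rw [Finset.prod_eq_single i (fun j _ hj ↦ by simp [hj]) (by simp)]
    simp

theorem stmt10_general
    {Ω : Type*} [MeasurableSpace Ω] (μ : Measure Ω) [IsProbabilityMeasure μ]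
    {n m : ℕ}
    (X : Fin n → Ω → ℝ) (hXm : ∀ i, Measurable (X i))
    (hNA : NegativelyAssociated μ X)
    (A : Fin m → Finset (Fin n))
    (hdisj : ∀ i j, i ≠ j → Disjoint (A i) (A j))
    (κ : Fin m → Kernel (Fin n → ℝ) ℝ)
    (hκ : ∀ i, IsMarkovKernel (κ i))
    (hmono : ∀ (i : Fin m) (x y : Fin n → ℝ), (∀ j ∈ A i, x j ≤ y j) →
      ∀ t : ℝ, (κ i) y (Set.Iic t) ≤ (κ i) x (Set.Iic t))
    (hpos : ∀ (i : Fin m) (x : Fin n → ℝ), (κ i) x (Set.Iio (0 : ℝ)) = 0)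
    (Z : Fin m → Ω → ℝ) (hZm : ∀ i, Measurable (Z i))
    (hjoint : ∀ (C : Set (Fin n → ℝ)) (B : Fin m → Set ℝ),
      MeasurableSet C → (∀ i, MeasurableSet (B i)) →
      μ {ω | (fun i => X i ω) ∈ C ∧ ∀ i, Z i ω ∈ B i}
        = ∫⁻ x in C, ∏ i, (κ i) x (B i)
            ∂(Measure.map (fun ω (i : Fin n) => X i ω) μ))
    (hints : ∀ i, Integrable (Z i) μ) :
    ∫ ω, ∏ i, Z i ω ∂μ ≤ ∏ i, ∫ ω, Z i ω ∂μ := by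
  set ν := μ.map fun ω (j : Fin n) ↦ X j ω
  have hlaw (B : Fin m → Set ℝ) (hB : ∀ i, MeasurableSet (B i)) :
      μ {ω | ∀ i, Z i ω ∈ B i} = ∫⁻ x, ∏ i, κ i x (B i) ∂ν := by
    simpa using hjoint univ B .univ hB
  have hmarg := measure_preimage_eq_lintegral_of_measure_forall_mem_eq hlaw
  have hZ0 (i : Fin m) : 0 ≤ᵐ[μ] Z i := by
    have hneg : μ (Z i ⁻¹' Iio 0) = 0 := by
      simp only [hmarg i measurableSet_Iio, hpos, lintegral_zero]
    exact ae_iff.2 (by simp only [Pi.zero_apply, not_le]; exact hneg)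
  refine integral_prod_le_prod_integral_of_measure_forall_lt_le hZm hZ0 hints fun t ↦ ?_
  calc μ {ω | ∀ i, t i < Z i ω} = ∫⁻ x, ∏ i, κ i x (Ioi (t i)) ∂ν :=
        hlaw _ fun _ ↦ measurableSet_Ioi
    _ ≤ ∏ i, ∫⁻ x, κ i x (Ioi (t i)) ∂ν :=
        hNA.lintegral_prod_le_prod_lintegral_map hXm (fun i j ↦ hdisj i j)
          (fun i ↦ Kernel.measurable_coe _ measurableSet_Ioi) (fun _ _ ↦ prob_le_one)
          fun i x y hxy ↦ measure_Ioi_le_of_measure_Iic_le (hmono i x y hxy (t i))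
    _ = ∏ i, μ {ω | t i < Z i ω} :=
        Finset.prod_congr rfl fun i _ ↦ (hmarg i measurableSet_Ioi).symm

/-- Let `X₁, …, Xₙ` be negatively associated, `A₁, …, A_m`
pairwise disjoint index sets, and for each `i` let `κ i` be a stochastically
increasing Markov kernel (depending only on the coordinates in `A i`) taking
values in `[0,∞)`. If `Z₁, …, Z_m` are sampled with `Z i ~ κ i (X_{A i})`,
with the kernel randomness mutually independent and independent of `X`, then
`E[Π_i Z_i] ≤ Π_i E[Z_i]`. -/
theorem stmt10
    {Ω : Type*} [MeasurableSpace Ω] (μ : Measure Ω) [IsProbabilityMeasure μ]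
    {n m : ℕ}
    (X : Fin n → Ω → ℝ) (hXm : ∀ i, Measurable (X i))
    (hNA : NegativelyAssociated μ X)
    (A : Fin m → Finset (Fin n))
    (hdisj : ∀ i j, i ≠ j → Disjoint (A i) (A j))
    (κ : Fin m → Kernel (Fin n → ℝ) ℝ)
    (hκ : ∀ i, IsMarkovKernel (κ i))
    (hmono : ∀ (i : Fin m) (x y : Fin n → ℝ), (∀ j ∈ A i, x j ≤ y j) →
      ∀ t : ℝ, (κ i) y (Set.Iic t) ≤ (κ i) x (Set.Iic t))
    (hpos : ∀ (i : Fin m) (x : Fin n → ℝ), (κ i) x (Set.Iio (0 : ℝ)) = 0)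
    (Z : Fin m → Ω → ℝ) (hZm : ∀ i, Measurable (Z i))
    (hjoint : ∀ (C : Set (Fin n → ℝ)) (B : Fin m → Set ℝ),
      MeasurableSet C → (∀ i, MeasurableSet (B i)) →
      μ {ω | (fun i => X i ω) ∈ C ∧ ∀ i, Z i ω ∈ B i}
        = ∫⁻ x in C, ∏ i, (κ i) x (B i)
            ∂(Measure.map (fun ω (i : Fin n) => X i ω) μ))
    (hint : Integrable (fun ω => ∏ i, Z i ω) μ)
    (hints : ∀ i, Integrable (Z i) μ) :
    ∫ ω, ∏ i, Z i ω ∂μ ≤ ∏ i, ∫ ω, Z i ω ∂μ :=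
  stmt10_general μ X hXm hNA A hdisj κ hκ hmono hpos Z hZm hjoint hints
end

section
/- Fix p ∈ (0,1) and let (Y₁, Y₂, …) be the infinite sequence generated by: Z₁ ~ Geometric(p); for each k ≥ 1, independently with probability p set Y_k = Z_k and Z_{k+1} = 0, and otherwise set Y_k = −1 and Z_{k+1} = Z_k + 1. Let W : {−1, 0, 1, 2, …} → [0,1) be any nondecreasing function, and define F(n) := E[ Π_{ℓ=1}^n (1 − W(Y_ℓ)) ] for n ≥ 0 (so F(0) = 1). Then the ratio F(n+1)/F(n) is nonincreasing in n; equivalently, F is log-concave: F(n)² ≥ F(n+1)·F(n−1) for all n ≥ 1. -/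
noncomputable def Gseq (p q a : ℝ) (b : ℕ → ℝ) : ℕ → ℕ → ℝ
  | 0, _ => 1
  | (n+1), v => p * b v * Gseq p q a b n 0 + q * a * Gseq p q a b n (v+1)

namespace Gseq

variable {p q a : ℝ} {b : ℕ → ℝ}

lemma zero (v : ℕ) : Gseq p q a b 0 v = 1 := rfl

lemma succ (n v : ℕ) :
    Gseq p q a b (n+1) v
      = p * b v * Gseq p q a b n 0 + q * a * Gseq p q a b n (v+1) := rfl

open Finset

lemma expansion : ∀ n v, Gseq p q a b n v
    = (∑ k ∈ range n, p * (q*a)^k * b (v+k) * Gseq p q a b (n-1-k) 0) + (q*a)^n := by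
  intro n
  induction n with
  | zero => intro v; simp [zero]
  | succ n ih =>
      intro v
      rw [succ, ih (v+1)]
      rw [Finset.sum_range_succ' (fun k => p * (q*a)^k * b (v+k) * Gseq p q a b (n+1-1-k) 0)]
      simp only [Nat.add_sub_cancel, Nat.succ_sub_one]
      rw [mul_add, Finset.mul_sum]
      have hterm : ∀ k, k ∈ range n →
          q * a * (p * (q*a)^k * b (v+1+k) * Gseq p q a b (n-1-k) 0)
            = p * (q*a)^(k+1) * b (v+(k+1)) * Gseq p q a b (n - (k+1)) 0 := by
        intro k hk
        have h1 : v + 1 + k = v + (k+1) := by ring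
        rw [h1]
        have h2 : n - 1 - k = n - (k + 1) := by omega
        rw [h2]; ring
      rw [Finset.sum_congr rfl hterm]
      simp only [Nat.add_zero, Nat.sub_zero]
      ring

/-- The central algebraic identity. -/
lemma key_identity (n v : ℕ) :
    Gseq p q a b (n+1) 0 * Gseq p q a b n v - Gseq p q a b n 0 * Gseq p q a b (n+1) v
      = ∑ k ∈ range (n+1), p * (q*a)^k * (b k - b (v+k)) *
          (Gseq p q a b n 0 * Gseq p q a b (n-k) 0
            - Gseq p q a b (n+1) 0 * (if k = n then 0 else Gseq p q a b (n-1-k) 0)) := by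
  have hS : ∀ w, (∑ k ∈ range (n+1), p * (q*a)^k * b (w+k) *
        (Gseq p q a b n 0 * Gseq p q a b (n-k) 0
          - Gseq p q a b (n+1) 0 * (if k = n then 0 else Gseq p q a b (n-1-k) 0)))
      = Gseq p q a b n 0 * (Gseq p q a b (n+1) w - (q*a)^(n+1))
        - Gseq p q a b (n+1) 0 * (Gseq p q a b n w - (q*a)^n) := by
    intro w
    have S1 : (∑ k ∈ range (n+1), p * (q*a)^k * b (w+k) * Gseq p q a b (n-k) 0)
        = Gseq p q a b (n+1) w - (q*a)^(n+1) := by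
      have := expansion (p := p) (q := q) (a := a) (b := b) (n+1) w
      simp only [Nat.succ_sub_one] at this
      linarith [this]
    have S2 : (∑ k ∈ range (n+1), p * (q*a)^k * b (w+k) *
          (if k = n then 0 else Gseq p q a b (n-1-k) 0))
        = Gseq p q a b n w - (q*a)^n := by
      rw [Finset.sum_range_succ]
      simp only [eq_self_iff_true, if_true, mul_zero, add_zero]
      have hc : ∀ k ∈ range n, p * (q*a)^k * b (w+k) *
          (if k = n then 0 else Gseq p q a b (n-1-k) 0)
            = p * (q*a)^k * b (w+k) * Gseq p q a b (n-1-k) 0 := by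
        intro k hk
        rw [if_neg (by have := Finset.mem_range.mp hk; omega)]
      rw [Finset.sum_congr rfl hc]
      have := expansion (p := p) (q := q) (a := a) (b := b) n w
      linarith [this]
    calc (∑ k ∈ range (n+1), p * (q*a)^k * b (w+k) *
        (Gseq p q a b n 0 * Gseq p q a b (n-k) 0
          - Gseq p q a b (n+1) 0 * (if k = n then 0 else Gseq p q a b (n-1-k) 0)))
        = (∑ k ∈ range (n+1),
            (Gseq p q a b n 0 * (p * (q*a)^k * b (w+k) * Gseq p q a b (n-k) 0)
              - Gseq p q a b (n+1) 0 * (p * (q*a)^k * b (w+k) *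
                  (if k = n then 0 else Gseq p q a b (n-1-k) 0)))) := by
          apply Finset.sum_congr rfl; intros; ring
      _ = Gseq p q a b n 0 * (∑ k ∈ range (n+1), p * (q*a)^k * b (w+k) * Gseq p q a b (n-k) 0)
            - Gseq p q a b (n+1) 0 * (∑ k ∈ range (n+1), p * (q*a)^k * b (w+k) *
                (if k = n then 0 else Gseq p q a b (n-1-k) 0)) := by
          rw [Finset.sum_sub_distrib, Finset.mul_sum, Finset.mul_sum]
      _ = _ := by rw [S1, S2]
  have h1 := hS v
  have h2 := hS 0
  have h3 : (∑ k ∈ range (n+1), p * (q*a)^k * (b k - b (v+k)) *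
        (Gseq p q a b n 0 * Gseq p q a b (n-k) 0
          - Gseq p q a b (n+1) 0 * (if k = n then 0 else Gseq p q a b (n-1-k) 0)))
      = (∑ k ∈ range (n+1), p * (q*a)^k * b (0+k) *
        (Gseq p q a b n 0 * Gseq p q a b (n-k) 0
          - Gseq p q a b (n+1) 0 * (if k = n then 0 else Gseq p q a b (n-1-k) 0)))
      - (∑ k ∈ range (n+1), p * (q*a)^k * b (v+k) *
        (Gseq p q a b n 0 * Gseq p q a b (n-k) 0
          - Gseq p q a b (n+1) 0 * (if k = n then 0 else Gseq p q a b (n-1-k) 0))) := by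
    rw [← Finset.sum_sub_distrib]
    apply Finset.sum_congr rfl
    intros k hk
    simp only [Nat.zero_add]
    ring
  rw [h3, h1, h2]
  ring


section Order

variable (hp : 0 < p) (hq : 0 < q) (ha : 0 < a) (hb0 : ∀ v, 0 < b v)

include hp hq ha hb0 in
lemma pos : ∀ n v, 0 < Gseq p q a b n v := by
  intro n
  induction n with
  | zero => intro v; norm_num [zero]
  | succ n ih =>
      intro v
      rw [succ]
      have h1 := mul_pos (mul_pos hp (hb0 v)) (ih 0)
      have h2 := mul_pos (mul_pos hq ha) (ih (v+1))
      linarith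

include hp hq ha hb0 in
lemma ratio_chain {M : ℕ}
    (hLC : ∀ m, m + 2 ≤ M →
      Gseq p q a b (m+2) 0 * Gseq p q a b m 0 ≤ Gseq p q a b (m+1) 0 ^ 2) :
    ∀ i j, i ≤ j → j + 1 ≤ M →
      Gseq p q a b (j+1) 0 * Gseq p q a b i 0 ≤ Gseq p q a b j 0 * Gseq p q a b (i+1) 0 := by
  intro i j hij
  induction j, hij using Nat.le_induction with
  | base => intro _; apply le_of_eq; ring
  | succ j hij ih =>
      intro hjM
      have hLCj := hLC j (by omega)
      have hIH := ih (by omega)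
      have hgj := pos hp hq ha hb0 j 0
      have hgj1 := pos hp hq ha hb0 (j+1) 0
      have hgi := pos hp hq ha hb0 i 0
      have hgi1 := pos hp hq ha hb0 (i+1) 0
      have hgj2 := pos hp hq ha hb0 (j+2) 0
      nlinarith [mul_le_mul hLCj hIH (by positivity) (by positivity)]

variable (hbmono : ∀ v w : ℕ, v ≤ w → b w ≤ b v)

include hp hq ha hb0 hbmono in
lemma key_cond (n : ℕ)
    (hLC : ∀ m, m + 2 ≤ n + 1 →
      Gseq p q a b (m+2) 0 * Gseq p q a b m 0 ≤ Gseq p q a b (m+1) 0 ^ 2) (v : ℕ) :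
    Gseq p q a b n 0 * Gseq p q a b (n+1) v
      ≤ Gseq p q a b (n+1) 0 * Gseq p q a b n v := by
  have hid := key_identity (p := p) (q := q) (a := a) (b := b) n v
  have hsum : 0 ≤ ∑ k ∈ range (n+1), p * (q*a)^k * (b k - b (v+k)) *
          (Gseq p q a b n 0 * Gseq p q a b (n-k) 0
            - Gseq p q a b (n+1) 0 * (if k = n then 0 else Gseq p q a b (n-1-k) 0)) := by
    apply Finset.sum_nonneg
    intro k hk
    have hkn : k ≤ n := by have := Finset.mem_range.mp hk; omega
    have hD : 0 ≤ Gseq p q a b n 0 * Gseq p q a b (n-k) 0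
            - Gseq p q a b (n+1) 0 * (if k = n then 0 else Gseq p q a b (n-1-k) 0) := by
      by_cases hkn' : k = n
      · rw [if_pos hkn']
        have := pos hp hq ha hb0 n 0
        have := pos hp hq ha hb0 (n-k) 0
        nlinarith
      · rw [if_neg hkn']
        have hklt : k < n := lt_of_le_of_ne hkn hkn'
        have hrc := ratio_chain hp hq ha hb0 hLC (n-1-k) n (by omega) (by omega)
        have hstep : n - 1 - k + 1 = n - k := by omega
        rw [hstep] at hrc
        linarith
    have hbk : 0 ≤ b k - b (v+k) := by
      have := hbmono k (v+k) (by omega)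
      linarith
    have hc : 0 ≤ p * (q*a)^k := by positivity
    exact mul_nonneg (mul_nonneg hc hbk) hD
  nlinarith [hid, hsum]

include hp hq ha hb0 hbmono in
lemma lc : ∀ m : ℕ, Gseq p q a b (m+2) 0 * Gseq p q a b m 0 ≤ Gseq p q a b (m+1) 0 ^ 2 := by
  intro m
  induction m using Nat.strong_induction_on with
  | _ m ih =>
      have hkey := key_cond hp hq ha hb0 hbmono m (fun j hj => ih j (by omega)) 1
      have e2 : Gseq p q a b (m+2) 0
          = p * b 0 * Gseq p q a b (m+1) 0 + q * a * Gseq p q a b (m+1) 1 := succ (m+1) 0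
      have e1 : Gseq p q a b (m+1) 0
          = p * b 0 * Gseq p q a b m 0 + q * a * Gseq p q a b m 1 := succ m 0
      have hqa : 0 < q * a := mul_pos hq ha
      have h1 := mul_le_mul_of_nonneg_left hkey hqa.le
      calc Gseq p q a b (m+2) 0 * Gseq p q a b m 0
          = p * b 0 * Gseq p q a b (m+1) 0 * Gseq p q a b m 0
            + q * a * (Gseq p q a b m 0 * Gseq p q a b (m+1) 1) := by rw [e2]; ring
        _ ≤ p * b 0 * Gseq p q a b (m+1) 0 * Gseq p q a b m 0
            + q * a * (Gseq p q a b (m+1) 0 * Gseq p q a b m 1) := by linarith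
        _ = Gseq p q a b (m+1) 0 * (p * b 0 * Gseq p q a b m 0 + q * a * Gseq p q a b m 1) := by
            ring
        _ = Gseq p q a b (m+1) 0 ^ 2 := by rw [← e1]; ring

include hp hq ha hb0 hbmono in
lemma key (n v : ℕ) :
    Gseq p q a b n 0 * Gseq p q a b (n+1) v
      ≤ Gseq p q a b (n+1) 0 * Gseq p q a b n v :=
  key_cond hp hq ha hb0 hbmono n (fun m _ => lc hp hq ha hb0 hbmono m) v

end Order


section Tsum

variable (hp : 0 < p) (hq0 : 0 < q) (hq1 : q < 1) (hpq : p + q = 1)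
  (ha : 0 < a) (ha1 : a ≤ 1) (hb0 : ∀ v, 0 < b v) (hba : ∀ v, b v ≤ a)
  (hbmono : ∀ v w : ℕ, v ≤ w → b w ≤ b v)

include hp hq0 hq1 hpq ha ha1 hb0 hba in
lemma G_le_one : ∀ n v, Gseq p q a b n v ≤ 1 := by
  intro n
  induction n with
  | zero => intro v; simp [zero]
  | succ n ih =>
      intro v
      rw [succ]
      have h0 := pos hp hq0 ha hb0 n 0
      have hv1 := pos hp hq0 ha hb0 n (v+1)
      have hb1 : b v ≤ 1 := le_trans (hba v) ha1
      have h1 : p * b v * Gseq p q a b n 0 ≤ p * b v := by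
        nlinarith [ih 0, mul_pos hp (hb0 v)]
      have h2 : q * a * Gseq p q a b n (v+1) ≤ q * a := by
        nlinarith [ih (v+1), mul_pos hq0 ha]
      have h3 : p * b v ≤ p := by nlinarith
      have h4 : q * a ≤ q := by nlinarith
      linarith

include hq0 hq1 in
lemma summable_w : Summable (fun v : ℕ => q^v * p) :=
  (summable_geometric_of_lt_one hq0.le hq1).mul_right p

include hp hq0 hq1 hpq ha ha1 hb0 hba in
lemma summable_wG (n : ℕ) : Summable (fun v : ℕ => q^v * p * Gseq p q a b n v) := by
  have hnn : ∀ v : ℕ, 0 ≤ q^v * p * Gseq p q a b n v := by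
    intro v
    have := pos hp hq0 ha hb0 n v
    positivity
  have hle : ∀ v : ℕ, q^v * p * Gseq p q a b n v ≤ q^v * p := by
    intro v
    have hle := G_le_one hp hq0 hq1 hpq ha ha1 hb0 hba n v
    have hwp : 0 ≤ q^v * p := by positivity
    nlinarith [pos hp hq0 ha hb0 n v]
  exact Summable.of_nonneg_of_le hnn hle (summable_w hq0 hq1)

include hp hq0 hq1 hpq ha ha1 hb0 hba in
lemma summable_wb : Summable (fun v : ℕ => q^v * p * b v) := by
  have hnn : ∀ v : ℕ, 0 ≤ q^v * p * b v := by
    intro v; have := hb0 v; positivity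
  have hle : ∀ v : ℕ, q^v * p * b v ≤ q^v * p := by
    intro v
    have hb1 : b v ≤ 1 := le_trans (hba v) ha1
    have hwp : 0 ≤ q^v * p := by positivity
    nlinarith [hb0 v]
  exact Summable.of_nonneg_of_le hnn hle (summable_w hq0 hq1)

include hp hq0 hq1 hpq in
lemma tsum_w : ∑' v : ℕ, q^v * p = 1 := by
  rw [tsum_mul_right, tsum_geometric_of_lt_one hq0.le hq1]
  have h1q : 1 - q = p := by linarith
  rw [h1q]
  field_simp

include hp hq0 hq1 hpq ha ha1 hb0 hba in
lemma Bs_le : ∑' v : ℕ, q^v * p * b v ≤ a := by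
  have h1 : ∑' v : ℕ, q^v * p * b v ≤ ∑' v : ℕ, q^v * p * a := by
    apply Summable.tsum_le_tsum _ (summable_wb hp hq0 hq1 hpq ha ha1 hb0 hba)
      ((summable_w hq0 hq1).mul_right a)
    intro v
    have hwp : 0 ≤ q^v * p := by positivity
    nlinarith [hba v]
  have h2 : ∑' v : ℕ, q^v * p * a = a := by
    rw [tsum_mul_right, tsum_w hp hq0 hq1 hpq, one_mul]
  linarith

include hp hq0 hq1 hpq ha ha1 hb0 hba in
lemma Fge_succ (n : ℕ) :
    ∑' v : ℕ, q^v * p * Gseq p q a b (n+1) v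
      = a * (∑' v : ℕ, q^v * p * Gseq p q a b n v)
        - p * (a - ∑' v : ℕ, q^v * p * b v) * Gseq p q a b n 0 := by
  have hshift : Summable (fun v : ℕ => q^(v+1) * p * Gseq p q a b n (v+1)) := by
    have : (fun v : ℕ => q^(v+1) * p * Gseq p q a b n (v+1))
        = (fun v : ℕ => q^v * p * Gseq p q a b n v) ∘ (fun v => v + 1) := rfl
    rw [this]
    exact (summable_wG hp hq0 hq1 hpq ha ha1 hb0 hba n).comp_injective Nat.succ_injective
  have hterm : ∀ v : ℕ, q^v * p * Gseq p q a b (n+1) v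
      = p * Gseq p q a b n 0 * (q^v * p * b v)
        + a * (q^(v+1) * p * Gseq p q a b n (v+1)) := by
    intro v; rw [succ]; ring
  have hsum1 : Summable (fun v : ℕ => p * Gseq p q a b n 0 * (q^v * p * b v)) :=
    (summable_wb hp hq0 hq1 hpq ha ha1 hb0 hba).mul_left _
  have hsum2 : Summable (fun v : ℕ => a * (q^(v+1) * p * Gseq p q a b n (v+1))) :=
    hshift.mul_left _
  calc ∑' v : ℕ, q^v * p * Gseq p q a b (n+1) v
      = ∑' v : ℕ, (p * Gseq p q a b n 0 * (q^v * p * b v)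
          + a * (q^(v+1) * p * Gseq p q a b n (v+1))) := by
        exact tsum_congr hterm
    _ = p * Gseq p q a b n 0 * (∑' v : ℕ, q^v * p * b v)
          + a * (∑' v : ℕ, q^(v+1) * p * Gseq p q a b n (v+1)) := by
        rw [Summable.tsum_add hsum1 hsum2, tsum_mul_left, tsum_mul_left]
    _ = _ := by
        have hz := Summable.tsum_eq_zero_add (summable_wG hp hq0 hq1 hpq ha ha1 hb0 hba n)
        simp only [pow_zero, one_mul] at hz
        rw [hz]
        ring

include hp hq0 hq1 hpq ha ha1 hb0 hba hbmono in
lemma key_tsum (n : ℕ) :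
    Gseq p q a b n 0 * (∑' v : ℕ, q^v * p * Gseq p q a b (n+1) v)
      ≤ Gseq p q a b (n+1) 0 * (∑' v : ℕ, q^v * p * Gseq p q a b n v) := by
  have hsubs : Summable (fun v : ℕ =>
      Gseq p q a b (n+1) 0 * (q^v * p * Gseq p q a b n v)) :=
    (summable_wG hp hq0 hq1 hpq ha ha1 hb0 hba n).mul_left _
  have hsubs' : Summable (fun v : ℕ =>
      Gseq p q a b n 0 * (q^v * p * Gseq p q a b (n+1) v)) :=
    (summable_wG hp hq0 hq1 hpq ha ha1 hb0 hba (n+1)).mul_left _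
  have hdiff : Gseq p q a b (n+1) 0 * (∑' v : ℕ, q^v * p * Gseq p q a b n v)
      - Gseq p q a b n 0 * (∑' v : ℕ, q^v * p * Gseq p q a b (n+1) v)
      = ∑' v : ℕ, (Gseq p q a b (n+1) 0 * (q^v * p * Gseq p q a b n v)
          - Gseq p q a b n 0 * (q^v * p * Gseq p q a b (n+1) v)) := by
    rw [Summable.tsum_sub hsubs hsubs', tsum_mul_left, tsum_mul_left]
  have hnn : 0 ≤ ∑' v : ℕ, (Gseq p q a b (n+1) 0 * (q^v * p * Gseq p q a b n v)
      - Gseq p q a b n 0 * (q^v * p * Gseq p q a b (n+1) v)) := by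
    apply tsum_nonneg
    intro v
    have hk := key hp hq0 ha hb0 hbmono n v
    have hwp : 0 ≤ q^v * p := by positivity
    nlinarith
  linarith

include hp hq0 hq1 hpq ha ha1 hb0 hba hbmono in
lemma logconcave (n : ℕ) :
    (∑' v : ℕ, q^v * p * Gseq p q a b (n+2) v) * (∑' v : ℕ, q^v * p * Gseq p q a b n v)
      ≤ (∑' v : ℕ, q^v * p * Gseq p q a b (n+1) v)^2 := by
  have e1 := Fge_succ hp hq0 hq1 hpq ha ha1 hb0 hba n
  have e2 := Fge_succ hp hq0 hq1 hpq ha ha1 hb0 hba (n+1)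
  have hc : 0 ≤ p * (a - ∑' v : ℕ, q^v * p * b v) := by
    have := Bs_le hp hq0 hq1 hpq ha ha1 hb0 hba
    nlinarith
  have hk := key_tsum hp hq0 hq1 hpq ha ha1 hb0 hba hbmono n
  rw [show n+1+1 = n+2 from rfl] at e2
  rw [e2, e1]
  rw [e1] at hk
  nlinarith [mul_nonneg hc (sub_nonneg.2 hk)]

end Tsum

end Gseq

namespace Stmt15aux

/-- Deterministic evolution of the `Z` chain. -/
def zdet (v : ℕ) (r : ℕ → Bool) : ℕ → ℕ
  | 0 => v
  | (k+1) => if r k then 0 else zdet v r k + 1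

/-- One-step factor. -/
noncomputable def facW (W : ℤ → ℝ) (z : ℕ) (x : Bool) : ℝ :=
  if x then 1 - W z else 1 - W (-1)

/-- Product of factors over horizon `n`. -/
noncomputable def psiW (W : ℤ → ℝ) (n : ℕ) (v : ℕ) (r : ℕ → Bool) : ℝ :=
  ∏ ℓ ∈ Finset.range n, facW W (zdet v r ℓ) (r ℓ)

/-- Truncation of a `Fin n`-indexed Boolean string. -/
def ext (n : ℕ) (r : Fin n → Bool) : ℕ → Bool :=
  fun k => if h : k < n then r ⟨k, h⟩ else false

lemma zdet_congr (v : ℕ) {r r' : ℕ → Bool} : ∀ k, (∀ i, i < k → r i = r' i) →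
    zdet v r k = zdet v r' k := by
  intro k
  induction k with
  | zero => intro _; rfl
  | succ k ih =>
      intro h
      show (if r k then 0 else zdet v r k + 1) = (if r' k then 0 else zdet v r' k + 1)
      rw [h k (by omega), ih (fun i hi => h i (by omega))]

lemma psiW_congr (W : ℤ → ℝ) (n v : ℕ) {r r' : ℕ → Bool}
    (h : ∀ i, i < n → r i = r' i) : psiW W n v r = psiW W n v r' := by
  unfold psiW
  apply Finset.prod_congr rfl
  intro ℓ hℓ
  have hℓn := Finset.mem_range.mp hℓ
  rw [h ℓ hℓn, zdet_congr v ℓ (fun i hi => h i (by omega))]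

lemma ext_cons_zero (n : ℕ) (x : Bool) (r : Fin n → Bool) :
    ext (n+1) (Fin.cons x r) 0 = x := by
  unfold ext
  rw [dif_pos (Nat.succ_pos n)]
  have h0 : (⟨0, Nat.succ_pos n⟩ : Fin (n+1)) = 0 := rfl
  rw [h0]
  exact Fin.cons_zero (α := fun _ => Bool) x r

lemma ext_cons_succ (n : ℕ) (x : Bool) (r : Fin n → Bool) (k : ℕ) :
    ext (n+1) (Fin.cons x r) (k+1) = ext n r k := by
  unfold ext
  by_cases h : k < n
  · rw [dif_pos (by omega : k + 1 < n + 1), dif_pos h]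
    exact congrArg _ rfl
  · rw [dif_neg (by omega), dif_neg h]

lemma zdet_cons (n : ℕ) (x : Bool) (r : Fin n → Bool) (v : ℕ) : ∀ k,
    zdet v (ext (n+1) (Fin.cons x r)) (k+1)
      = zdet (if x then 0 else v + 1) (ext n r) k := by
  intro k
  induction k with
  | zero =>
      show (if ext (n+1) (Fin.cons x r) 0 then 0 else v + 1) = _
      rw [ext_cons_zero]
      rfl
  | succ k ih =>
      show (if ext (n+1) (Fin.cons x r) (k+1) then 0
          else zdet v (ext (n+1) (Fin.cons x r)) (k+1) + 1) = _
      rw [ext_cons_succ, ih]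
      rfl

/-- The combinatorial core: summing over Boolean strings yields `Gseq`. -/
lemma sum_psi (p q a : ℝ) (W : ℤ → ℝ) (b : ℕ → ℝ)
    (hab : a = 1 - W (-1)) (hb : ∀ v : ℕ, b v = 1 - W (v : ℤ)) :
    ∀ n v, (∑ r : Fin n → Bool,
        (∏ i, (if r i then p else q)) * psiW W n v (ext n r)) = Gseq p q a b n v := by
  intro n
  induction n with
  | zero =>
      intro v
      simp [psiW, Gseq]
  | succ n ih =>
      intro v
      rw [← Equiv.sum_comp (Fin.consEquiv (fun _ : Fin (n+1) => Bool))
        (fun r : Fin (n+1) → Bool => (∏ i, (if r i then p else q)) * psiW W (n+1) v (ext (n+1) r))]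
      rw [Fintype.sum_prod_type]
      have hterm : ∀ (x : Bool) (r : Fin n → Bool),
          (∏ i, (if (Fin.consEquiv (fun _ : Fin (n+1) => Bool)) (x, r) i then p else q))
              * psiW W (n+1) v (ext (n+1) ((Fin.consEquiv (fun _ : Fin (n+1) => Bool)) (x, r)))
            = ((if x then p else q) * facW W v x)
              * ((∏ i, (if r i then p else q))
                  * psiW W n (if x then 0 else v + 1) (ext n r)) := by
        intro x r
        have he : (Fin.consEquiv (fun _ : Fin (n+1) => Bool)) (x, r)
            = (Fin.cons x r : Fin (n+1) → Bool) := rfl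
        rw [he]
        have hprod : (∏ i, (if (Fin.cons x r : Fin (n+1) → Bool) i then p else q))
            = (if x then p else q) * ∏ i, (if r i then p else q) := by
          rw [Fin.prod_univ_succ]
          simp [Fin.cons_zero, Fin.cons_succ]
        have hpsi : psiW W (n+1) v (ext (n+1) (Fin.cons x r))
            = facW W v x * psiW W n (if x then 0 else v + 1) (ext n r) := by
          unfold psiW
          rw [Finset.prod_range_succ'
            (fun ℓ => facW W (zdet v (ext (n+1) (Fin.cons x r)) ℓ) (ext (n+1) (Fin.cons x r) ℓ))]
          have h0 : facW W (zdet v (ext (n+1) (Fin.cons x r)) 0) (ext (n+1) (Fin.cons x r) 0)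
              = facW W v x := by rw [ext_cons_zero]; rfl
          have hstep : ∀ ℓ ∈ Finset.range n,
              facW W (zdet v (ext (n+1) (Fin.cons x r)) (ℓ+1)) (ext (n+1) (Fin.cons x r) (ℓ+1))
                = facW W (zdet (if x then 0 else v + 1) (ext n r) ℓ) (ext n r ℓ) := by
            intro ℓ _
            rw [zdet_cons, ext_cons_succ]
          rw [h0, Finset.prod_congr rfl hstep]
          ring
        rw [hprod, hpsi]
        ring
      rw [Finset.sum_congr rfl (fun x _ => Finset.sum_congr rfl (fun r _ => hterm x r))]
      have hx : ∀ x : Bool, (∑ r : Fin n → Bool,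
          ((if x then p else q) * facW W v x)
            * ((∏ i, (if r i then p else q)) * psiW W n (if x then 0 else v + 1) (ext n r)))
          = ((if x then p else q) * facW W v x) * Gseq p q a b n (if x then 0 else v + 1) := by
        intro x
        rw [← Finset.mul_sum, ih]
      rw [Finset.sum_congr rfl (fun x _ => hx x)]
      rw [Fintype.sum_bool]
      show (p * facW W v true) * Gseq p q a b n 0
          + (q * facW W v false) * Gseq p q a b n (v+1)
        = Gseq p q a b (n+1) v
      have h1 : facW W v true = b v := by rw [facW, if_pos rfl, hb]
      have h2 : facW W v false = a := by rw [facW, if_neg (by simp), hab]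
      rw [h1, h2]
      show _ = p * b v * Gseq p q a b n 0 + q * a * Gseq p q a b n (v+1)
      ring


open MeasureTheory ProbabilityTheory

lemma integral_eq
    {Ω : Type*} [MeasurableSpace Ω] (μ : Measure Ω) [IsProbabilityMeasure μ]
    (p : ℝ) (hp : p ∈ Set.Ioo (0 : ℝ) 1)
    (Z : ℕ → Ω → ℕ) (R : ℕ → Ω → Bool)
    (hZm : ∀ k, Measurable (Z k)) (hRm : ∀ k, Measurable (R k))
    (hZ0 : ∀ v : ℕ, μ {ω | Z 0 ω = v} = ENNReal.ofReal ((1 - p) ^ v * p))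
    (hR : ∀ k, μ {ω | R k ω = true} = ENNReal.ofReal p)
    (hindep : iIndepFun
      (fun i : Option ℕ =>
        i.elim (Z 0) (fun k ω => if R k ω then (1 : ℕ) else 0)) μ)
    (hrec : ∀ k ω, Z (k + 1) ω = if R k ω then 0 else Z k ω + 1)
    (Y : ℕ → Ω → ℤ)
    (hY : ∀ k ω, Y k ω = if R k ω then (Z k ω : ℤ) else -1)
    (W : ℤ → ℝ)
    (hWrange : ∀ y : ℤ, -1 ≤ y → W y ∈ Set.Ico (0 : ℝ) 1)
    (n : ℕ) :
    ∫ ω, ∏ ℓ ∈ Finset.range n, (1 - W (Y ℓ ω)) ∂μ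
      = ∑' v : ℕ, (1-p)^v * p *
          Gseq p (1-p) (1 - W (-1)) (fun v : ℕ => 1 - W (v : ℤ)) n v := by
  classical
  obtain ⟨hp0, hp1⟩ := hp
  have hq0 : (0:ℝ) ≤ 1 - p := by linarith
  -- bounds on factors
  have hcast : ∀ z : ℕ, (-1 : ℤ) ≤ (z : ℤ) := by
    intro z
    have := Int.natCast_nonneg z
    linarith
  have hfac_pos : ∀ z x, 0 < facW W z x := by
    intro z x
    unfold facW
    have h1 := (hWrange (-1) (le_refl _)).2
    have h2 := (hWrange z (hcast z)).2
    cases x with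
    | false => simp only [Bool.false_eq_true, if_false]; linarith
    | true => simp only [if_true]; linarith
  have hfac_le1 : ∀ z x, facW W z x ≤ 1 := by
    intro z x
    unfold facW
    have h1 := (hWrange (-1) (le_refl _)).1
    have h2 := (hWrange z (hcast z)).1
    cases x with
    | false => simp only [Bool.false_eq_true, if_false]; linarith
    | true => simp only [if_true]; linarith
  have hpsi_pos : ∀ v r, 0 < psiW W n v r := by
    intro v r
    exact Finset.prod_pos (fun ℓ _ => hfac_pos _ _)
  have hpsi_le1 : ∀ v r, psiW W n v r ≤ 1 := by
    intro v r
    exact Finset.prod_le_one (fun ℓ _ => (hfac_pos _ _).le) (fun ℓ _ => hfac_le1 _ _)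
  -- the countable decomposition map
  set T : Ω → ℕ × (Fin n → Bool) := fun ω => (Z 0 ω, fun i => R (i : ℕ) ω) with hT
  have hTm : Measurable T :=
    Measurable.prodMk (hZm 0) (measurable_pi_lambda _ (fun i => hRm (i : ℕ)))
  set Φ : ℕ × (Fin n → Bool) → ℝ := fun x => psiW W n x.1 (ext n x.2) with hΦ
  have hΦm : Measurable Φ := measurable_of_countable _
  -- the integrand is Φ ∘ T
  have hzdet : ∀ ω k, Z k ω = zdet (Z 0 ω) (fun i => R i ω) k := by
    intro ω k
    induction k with
    | zero => rfl
    | succ k ih =>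
        rw [hrec k ω, ih]
        rfl
  have hint : ∀ ω, (∏ ℓ ∈ Finset.range n, (1 - W (Y ℓ ω))) = Φ (T ω) := by
    intro ω
    have h1 : Φ (T ω) = psiW W n (Z 0 ω) (fun i => R i ω) := by
      rw [hΦ]
      apply psiW_congr
      intro i hi
      unfold ext
      rw [dif_pos hi]
    rw [h1]
    unfold psiW
    apply Finset.prod_congr rfl
    intro ℓ _
    rw [hY ℓ ω, ← hzdet ω ℓ]
    unfold facW
    rcases hRl : R ℓ ω with _ | _ <;> simp [hRl]
  -- instances and integrability
  haveI : IsProbabilityMeasure (μ.map T) := Measure.isProbabilityMeasure_map hTm.aemeasurable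
  have hInt : Integrable Φ (μ.map T) := by
    apply Integrable.mono' (integrable_const (1:ℝ)) hΦm.aestronglyMeasurable
    apply MeasureTheory.ae_of_all
    intro x
    rw [Real.norm_eq_abs, abs_of_nonneg (hpsi_pos _ _).le]
    exact hpsi_le1 _ _
  -- the singleton masses
  have hmeas : ∀ v : ℕ, ∀ r : Fin n → Bool, (μ.map T) {(v, r)}
      = ENNReal.ofReal ((1-p)^v * p)
        * ∏ i : Fin n, ENNReal.ofReal (if r i then p else (1-p)) := by
    intro v r
    rw [Measure.map_apply hTm (measurableSet_singleton _)]
    set bset : ℕ → ℕ := fun k => if h : k < n then (if r ⟨k, h⟩ then 1 else 0) else 0 with hbset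
    set E : Option ℕ → Set ℕ := fun j => j.elim {v} (fun k => {bset k}) with hE
    set f : Fin n → Option ℕ := fun i => (some (i : ℕ) : Option ℕ) with hf
    set S : Finset (Option ℕ) := insert none (Finset.image f Finset.univ) with hS
    have hpre : T ⁻¹' {(v, r)}
        = ⋂ j ∈ S, (fun i : Option ℕ =>
            i.elim (Z 0) (fun k ω => if R k ω then (1 : ℕ) else 0)) j ⁻¹' E j := by
      ext ω
      simp only [hT, Set.mem_preimage, Set.mem_singleton_iff, Prod.mk.injEq, Set.mem_iInter]
      constructor
      · rintro ⟨h1, h2⟩ j hj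
        rw [hS, Finset.mem_insert] at hj
        rcases hj with rfl | hj
        · simpa [hE] using h1
        · rw [Finset.mem_image] at hj
          obtain ⟨i, -, rfl⟩ := hj
          have h2i : R (i : ℕ) ω = r i := congrFun h2 i
          simp only [hf, hE, Option.elim, Set.mem_preimage, Set.mem_singleton_iff, hbset]
          rw [dif_pos i.isLt]
          have heta : (⟨(i : ℕ), i.isLt⟩ : Fin n) = i := by
            apply Fin.ext; rfl
          rw [heta, h2i]
      · intro h
        have h1 := h none (Finset.mem_insert_self _ _)
        have h2 : ∀ i : Fin n, R (i : ℕ) ω = r i := by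
          intro i
          have hmem : f i ∈ S := by
            rw [hS]
            exact Finset.mem_insert_of_mem (Finset.mem_image_of_mem f (Finset.mem_univ i))
          have := h (f i) hmem
          simp only [hf, hE, Option.elim, Set.mem_preimage, Set.mem_singleton_iff, hbset] at this
          rw [dif_pos i.isLt] at this
          have heta : (⟨(i : ℕ), i.isLt⟩ : Fin n) = i := by
            apply Fin.ext; rfl
          rw [heta] at this
          cases hRi : R (i : ℕ) ω <;> cases hri : r i <;> rw [hRi, hri] at this <;>
            first
              | rfl
              | (exfalso; simp at this)
        have h1' : Z 0 ω = v := by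
          simpa [hE] using h1
        exact ⟨h1', funext h2⟩
    rw [hpre]
    rw [hindep.measure_inter_preimage_eq_mul S
      (fun j _ => by rcases j with _ | k <;> exact measurableSet_singleton _)]
    have hnone : (none : Option ℕ) ∉ Finset.image f Finset.univ := by
      simp [hf]
    rw [hS, Finset.prod_insert hnone]
    rw [Finset.prod_image (by
      intro i _ j _ hij
      simp only [hf, Option.some_inj] at hij
      exact Fin.ext (by exact_mod_cast hij))]
    have hZpart : μ ((fun i : Option ℕ =>
        i.elim (Z 0) (fun k ω => if R k ω then (1 : ℕ) else 0)) none ⁻¹' E none)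
        = ENNReal.ofReal ((1-p)^v * p) := by
      have : (fun i : Option ℕ =>
          i.elim (Z 0) (fun k ω => if R k ω then (1 : ℕ) else 0)) none ⁻¹' E none
          = {ω | Z 0 ω = v} := by
        ext ω; simp [hE]
      rw [this, hZ0 v]
    have hRpart : ∀ i : Fin n, μ ((fun j : Option ℕ =>
        j.elim (Z 0) (fun k ω => if R k ω then (1 : ℕ) else 0)) (f i) ⁻¹' E (f i))
        = ENNReal.ofReal (if r i then p else (1-p)) := by
      intro i
      have hset : (fun j : Option ℕ =>
          j.elim (Z 0) (fun k ω => if R k ω then (1 : ℕ) else 0)) (f i) ⁻¹' E (f i)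
          = (if r i then {ω | R (i:ℕ) ω = true} else {ω | R (i:ℕ) ω = true}ᶜ) := by
        ext ω
        simp only [hf, hE, Option.elim, Set.mem_preimage, Set.mem_singleton_iff,
          Set.mem_compl_iff, Set.mem_setOf_eq, hbset]
        rw [dif_pos i.isLt]
        have heta : (⟨(i : ℕ), i.isLt⟩ : Fin n) = i := by apply Fin.ext; rfl
        rw [heta]
        rcases hRi : R (i : ℕ) ω with _ | _ <;> rcases hri : r i with _ | _ <;>
          simp [hRi, hri]
      rw [hset]
      rcases hri : r i with _ | _
      · rw [if_neg (by simp)]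
        have hmsb : MeasurableSet {ω | R (i:ℕ) ω = true} := by
          have h' : MeasurableSet (R (i:ℕ) ⁻¹' {true}) :=
            hRm (i:ℕ) (measurableSet_singleton true)
          exact h'
        rw [prob_compl_eq_one_sub hmsb, hR (i:ℕ)]
        rw [← ENNReal.ofReal_one, ← ENNReal.ofReal_sub _ hp0.le]
        norm_num
      · rw [if_pos rfl]
        exact hR (i:ℕ)
    rw [hZpart]
    congr 1
    apply Finset.prod_congr rfl
    intro i _
    exact hRpart i
  -- summability of the pieces
  have hsingle_sum : ∑' x : ℕ × (Fin n → Bool), (μ.map T) {x} = 1 := by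
    have hdisj : Pairwise (Function.onFun Disjoint
        (fun x : ℕ × (Fin n → Bool) => ({x} : Set (ℕ × (Fin n → Bool))))) := by
      intro x y hxy
      simp [Function.onFun, Set.disjoint_singleton, hxy]
    rw [← measure_iUnion hdisj (fun x => measurableSet_singleton x),
      Set.iUnion_of_singleton]
    exact measure_univ
  have hgsum : Summable (fun x : ℕ × (Fin n → Bool) => ((μ.map T) {x}).toReal) := by
    apply ENNReal.summable_toReal
    rw [hsingle_sum]
    exact ENNReal.one_ne_top
  have hfsum : Summable (fun x : ℕ × (Fin n → Bool) => ((μ.map T) {x}).toReal • Φ x) := by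
    apply Summable.of_nonneg_of_le _ _ hgsum
    · intro x
      exact smul_nonneg ENNReal.toReal_nonneg (hpsi_pos _ _).le
    · intro x
      have h1 : ((μ.map T) {x}).toReal • Φ x ≤ ((μ.map T) {x}).toReal • 1 := by
        apply smul_le_smul_of_nonneg_left (hpsi_le1 _ _) ENNReal.toReal_nonneg
      simpa using h1
  -- main computation
  calc ∫ ω, ∏ ℓ ∈ Finset.range n, (1 - W (Y ℓ ω)) ∂μ
      = ∫ ω, Φ (T ω) ∂μ := by
        apply integral_congr_ae
        exact MeasureTheory.ae_of_all _ hint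
    _ = ∫ x, Φ x ∂(μ.map T) := (integral_map hTm.aemeasurable hΦm.aestronglyMeasurable).symm
    _ = ∑' x : ℕ × (Fin n → Bool), ((μ.map T) {x}).toReal • Φ x := integral_countable' hInt
    _ = ∑' v : ℕ, ∑' r : Fin n → Bool, ((μ.map T) {(v, r)}).toReal • Φ (v, r) :=
        Summable.tsum_prod' hfsum (fun v => hfsum.prod_factor v)
    _ = ∑' v : ℕ, (1-p)^v * p *
          Gseq p (1-p) (1 - W (-1)) (fun v : ℕ => 1 - W (v : ℤ)) n v := by
        apply tsum_congr
        intro v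
        rw [tsum_fintype]
        have hterm : ∀ r : Fin n → Bool, ((μ.map T) {(v, r)}).toReal • Φ (v, r)
            = ((1-p)^v * p) * ((∏ i, (if r i then p else (1-p))) * psiW W n v (ext n r)) := by
          intro r
          rw [hmeas v r]
          rw [ENNReal.toReal_mul, ENNReal.toReal_prod]
          rw [ENNReal.toReal_ofReal (by positivity)]
          have hprod : ∀ i : Fin n, (ENNReal.ofReal (if r i then p else (1-p))).toReal
              = (if r i then p else (1-p)) := by
            intro i
            rcases hri : r i with _ | _
            · simp only [Bool.false_eq_true, if_false]
              exact ENNReal.toReal_ofReal (by linarith)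
            · simp only [if_true]
              exact ENNReal.toReal_ofReal hp0.le
          rw [Finset.prod_congr rfl (fun i _ => hprod i)]
          rw [smul_eq_mul, hΦ]
          ring
        rw [Finset.sum_congr rfl (fun r _ => hterm r)]
        rw [← Finset.mul_sum]
        rw [sum_psi p (1-p) (1 - W (-1)) W (fun v : ℕ => 1 - W (v : ℤ)) rfl (fun _ => rfl) n v]

end Stmt15aux


open MeasureTheory ProbabilityTheory Set

/-- Fix `p ∈ (0,1)` and let `(Y₁, Y₂, …)` be generated by:
`Z₀ ~ Geometric(p)`; at each step `k`, independently with probability `p`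
(indicator `R k`) set `Y_k = Z_k` and reset `Z_{k+1} = 0`, and otherwise set
`Y_k = −1` and `Z_{k+1} = Z_k + 1`. Let `W : {−1, 0, 1, …} → [0,1)` be any
nondecreasing function and set `F(n) := E[Π_{ℓ=1}^n (1 − W(Y_ℓ))]`. Then
`F(n)² ≥ F(n+1)·F(n−1)` for all `n ≥ 1`, i.e. the ratio `F(n+1)/F(n)` is
nonincreasing in `n`. -/
theorem stmt15
    {Ω : Type*} [MeasurableSpace Ω] (μ : Measure Ω) [IsProbabilityMeasure μ]
    (p : ℝ) (hp : p ∈ Set.Ioo (0 : ℝ) 1)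
    (Z : ℕ → Ω → ℕ) (R : ℕ → Ω → Bool)
    (hZm : ∀ k, Measurable (Z k)) (hRm : ∀ k, Measurable (R k))
    (hZ0 : ∀ v : ℕ, μ {ω | Z 0 ω = v} = ENNReal.ofReal ((1 - p) ^ v * p))
    (hR : ∀ k, μ {ω | R k ω = true} = ENNReal.ofReal p)
    (hindep : iIndepFun
      (fun i : Option ℕ =>
        i.elim (Z 0) (fun k ω => if R k ω then (1 : ℕ) else 0)) μ)
    (hrec : ∀ k ω, Z (k + 1) ω = if R k ω then 0 else Z k ω + 1)
    (Y : ℕ → Ω → ℤ)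
    (hY : ∀ k ω, Y k ω = if R k ω then (Z k ω : ℤ) else -1)
    (W : ℤ → ℝ)
    (hWmono : ∀ a b : ℤ, -1 ≤ a → a ≤ b → W a ≤ W b)
    (hWrange : ∀ y : ℤ, -1 ≤ y → W y ∈ Set.Ico (0 : ℝ) 1)
    (F : ℕ → ℝ)
    (hF : ∀ n : ℕ, F n = ∫ ω, ∏ ℓ ∈ Finset.range n, (1 - W (Y ℓ ω)) ∂μ) :
    ∀ n : ℕ, 1 ≤ n → F (n + 1) * F (n - 1) ≤ F n ^ 2 := by
  intro n hn
  obtain ⟨m, rfl⟩ : ∃ m, n = m + 1 := ⟨n - 1, by omega⟩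
  have hsub : m + 1 - 1 = m := by omega
  rw [hsub]
  obtain ⟨hp0, hp1⟩ := hp
  have hq0 : (0:ℝ) < 1 - p := by linarith
  have hq1 : (1:ℝ) - p < 1 := by linarith
  have hpq : p + (1 - p) = 1 := by ring
  have hWm1 := hWrange (-1) le_rfl
  have ha : (0:ℝ) < 1 - W (-1) := by have := hWm1.2; linarith
  have ha1 : 1 - W (-1) ≤ 1 := by have := hWm1.1; linarith
  have hcast : ∀ z : ℕ, (-1 : ℤ) ≤ (z : ℤ) := by
    intro z; have := Int.natCast_nonneg z; linarith
  have hb0 : ∀ v : ℕ, 0 < (fun v : ℕ => 1 - W (v : ℤ)) v := by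
    intro v; have := (hWrange v (hcast v)).2; simpa using by linarith
  have hba : ∀ v : ℕ, (fun v : ℕ => 1 - W (v : ℤ)) v ≤ 1 - W (-1) := by
    intro v
    have := hWmono (-1) v le_rfl (hcast v)
    simpa using by linarith
  have hbmono : ∀ v w : ℕ, v ≤ w →
      (fun v : ℕ => 1 - W (v : ℤ)) w ≤ (fun v : ℕ => 1 - W (v : ℤ)) v := by
    intro v w hvw
    have := hWmono v w (hcast v) (by exact_mod_cast hvw)
    simpa using by linarith
  have hFeq : ∀ k : ℕ, F k = ∑' v : ℕ, (1-p)^v * p *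
      Gseq p (1-p) (1 - W (-1)) (fun v : ℕ => 1 - W (v : ℤ)) k v := by
    intro k
    rw [hF k]
    exact Stmt15aux.integral_eq μ p ⟨hp0, hp1⟩ Z R hZm hRm hZ0 hR hindep hrec Y hY W hWrange k
  rw [hFeq (m+1+1), hFeq m, hFeq (m+1)]
  exact Gseq.logconcave hp0 hq0 hq1 hpq ha ha1 hb0 hba hbmono m
end

section
/- Let a, b, c be three distinct elements. There is no joint distribution of random variables (S₁, S₂, S₃) with S₁ ∈ {a,b}, S₂ ∈ {b,c}, S₃ ∈ {a,b} satisfying all of: P[S₁ = a] = 1/2; P[S₂ = b] = 1/2; P[S₁ ≠ b and S₂ ≠ b] < 1/6; P[S₂ ≠ b and S₃ ≠ b] < 1/6; and P[S₁ ≠ a and S₃ ≠ a] < 1/6. -/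
/-! On the event `S₂ ≠ b`, of probability at least `1/2`, one of the three "never selected" events
occurs: if neither `S₁ ≠ b` nor `S₃ ≠ b`, then `S₁ = S₃ = b`, and both differ from `a`. So the
three probabilities sum to at least `1/2` and cannot all be below `1/6`. -/

open MeasureTheory Set
open scoped ENNReal

lemma setOf_ne_subset_union_of_ne {Ω α : Type*} {a b : α} (hab : a ≠ b) (S₁ S₂ S₃ : Ω → α) :
    {ω | S₂ ω ≠ b} ⊆
      {ω | S₁ ω ≠ b ∧ S₂ ω ≠ b} ∪ {ω | S₂ ω ≠ b ∧ S₃ ω ≠ b} ∪ {ω | S₁ ω ≠ a ∧ S₃ ω ≠ a} := by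
  intro ω (h₂ : S₂ ω ≠ b)
  by_cases h₁ : S₁ ω = b
  · by_cases h₃ : S₃ ω = b
    · exact Or.inr ⟨h₁ ▸ hab.symm, h₃ ▸ hab.symm⟩
    · exact Or.inl (Or.inr ⟨h₂, h₃⟩)
  · exact Or.inl (Or.inl ⟨h₁, h₂⟩)

lemma measure_le_add_add_of_subset_union {Ω : Type*} [MeasurableSpace Ω] (μ : Measure Ω)
    {s t u v : Set Ω} (h : s ⊆ t ∪ u ∪ v) : μ s ≤ μ t + μ u + μ v :=
  (measure_mono h).trans <|
    (measure_union_le _ _).trans (add_le_add_left (measure_union_le _ _) _)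

theorem stmt17_general
    {α : Type*}
    (a b : α) (hab : a ≠ b)
    {Ω : Type*} [MeasurableSpace Ω] (μ : Measure Ω) [IsProbabilityMeasure μ]
    (S₁ S₂ S₃ : Ω → α)
    (h₂ : μ {ω | S₂ ω = b} = 1 / 2)
    (h₃ : μ {ω | S₁ ω ≠ b ∧ S₂ ω ≠ b} < 1 / 6)
    (h₄ : μ {ω | S₂ ω ≠ b ∧ S₃ ω ≠ b} < 1 / 6)
    (h₅ : μ {ω | S₁ ω ≠ a ∧ S₃ ω ≠ a} < 1 / 6) :
    False := by
  have hcover := measure_le_add_add_of_subset_union μ (setOf_ne_subset_union_of_ne hab S₁ S₂ S₃)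
  refine lt_irrefl (1 : ℝ≥0∞) ?_
  calc 1 = μ univ := measure_univ.symm
    _ ≤ μ {ω | S₂ ω = b} + μ {ω | S₂ ω = b}ᶜ := measure_univ_le_add_compl _
    _ ≤ 1 / 2 + (μ {ω | S₁ ω ≠ b ∧ S₂ ω ≠ b} + μ {ω | S₂ ω ≠ b ∧ S₃ ω ≠ b} +
        μ {ω | S₁ ω ≠ a ∧ S₃ ω ≠ a}) := add_le_add h₂.le hcover
    _ < 1 / 2 + (1 / 6 + 1 / 6 + 1 / 6) :=
      ENNReal.add_lt_add_left (by finiteness) (ENNReal.add_lt_add (ENNReal.add_lt_add h₃ h₄) h₅)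
    _ = 1 := by
      rw [← ENNReal.toReal_eq_toReal_iff' (by finiteness) (by simp), ENNReal.toReal_add,
        ENNReal.toReal_add, ENNReal.toReal_add] <;> norm_num

/-- For three distinct elements `a, b, c`, there is no joint
distribution of `(S₁, S₂, S₃)` with `S₁ ∈ {a,b}`, `S₂ ∈ {b,c}`, `S₃ ∈ {a,b}`
such that `P[S₁ = a] = 1/2`, `P[S₂ = b] = 1/2`, and each of
`P[S₁ ≠ b ∧ S₂ ≠ b]`, `P[S₂ ≠ b ∧ S₃ ≠ b]`, `P[S₁ ≠ a ∧ S₃ ≠ a]` is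
strictly less than `1/6`. -/
theorem stmt17
    {α : Type*} [MeasurableSpace α] [MeasurableSingletonClass α]
    (a b c : α) (hab : a ≠ b) (hbc : b ≠ c) (hac : a ≠ c)
    {Ω : Type*} [MeasurableSpace Ω] (μ : Measure Ω) [IsProbabilityMeasure μ]
    (S₁ S₂ S₃ : Ω → α)
    (hm₁ : Measurable S₁) (hm₂ : Measurable S₂) (hm₃ : Measurable S₃)
    (hS₁ : ∀ ω, S₁ ω = a ∨ S₁ ω = b)
    (hS₂ : ∀ ω, S₂ ω = b ∨ S₂ ω = c)
    (hS₃ : ∀ ω, S₃ ω = a ∨ S₃ ω = b)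
    (h₁ : μ {ω | S₁ ω = a} = 1 / 2)
    (h₂ : μ {ω | S₂ ω = b} = 1 / 2)
    (h₃ : μ {ω | S₁ ω ≠ b ∧ S₂ ω ≠ b} < 1 / 6)
    (h₄ : μ {ω | S₂ ω ≠ b ∧ S₃ ω ≠ b} < 1 / 6)
    (h₅ : μ {ω | S₁ ω ≠ a ∧ S₃ ω ≠ a} < 1 / 6) :
    False :=
  stmt17_general a b hab μ S₁ S₂ S₃ h₂ h₃ h₄ h₅
end

section
/- Fix p ∈ (0,1), n ≥ 1, and a subset S ⊆ {1, …, n−1}. Let (Y₁, …, Yₙ) be generated by the process: Z₁ ~ Geometric(p); for each k = 1, …, n, independently with probability p set Y_k = Z_k and Z_{k+1} = 0, and otherwise set Y_k = −1 and Z_{k+1} = Z_k + 1; and condition on the event that Y_i = −1 for every i ∈ S. Then for every pair of nondecreasing bounded functions f₁ : ℤ → ℝ and f₂ : ℤ^{n−1} → ℝ (f₂ nondecreasing in each coordinate), Cov[f₁(Yₙ), f₂(Y₁, …, Y_{n−1})] ≤ 0 under the conditioned distribution. The same holds when Z₁ is initialized deterministically to 0 instead of drawn from Geometric(p). -/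
open MeasureTheory ProbabilityTheory Set

/-!
Since `Y_L ≥ -1` (with `L = n - 1`), the layer-cake formula writes `f₁ (Y_L)` as `f₁ (-1)` plus
a nonnegative combination of the indicators of `A_t = {t ≤ Y_L}`, `t ≥ 0`; truncating and passing
to the limit, it suffices that each `A_t` is negatively correlated with `H = f₂ (Y)` under the
conditional measure.

Put `c = L - t`. The event `A_t` says that step `L` resets, steps `c, …, L - 1` do not and,
if `c = 0`, that the seed `Z 0` is at least `t - L`; so it only involves the coins from step `c` on
(and the seed when `c = 0`). On `A_t` the coordinates `Y_i`, `c ≤ i < L`, are `-1`, hence `H`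
agrees there with `G = f₂ (Ŷ)`, where `Ŷ` replaces these coordinates by `-1`; `G ≤ H` everywhere,
and `G` only involves the seed and the coins before step `c`. The conditioning event splits along
the same two independent blocks, and independence gives
`E[H; E ∩ A_t] · P(E) = P(E ∩ A_t) · E[G; E] ≤ P(E ∩ A_t) · E[H; E]`.
-/

open Filter Topology

namespace ProbabilityTheory

section LayerCake

variable {Ω : Type*} [MeasurableSpace Ω] {ν : Measure Ω}

lemma integrable_of_forall_abs_le [IsFiniteMeasure ν] {g : Ω → ℝ} (hg : Measurable g) {C : ℝ}
    (hC : ∀ ω, |g ω| ≤ C) : Integrable g ν :=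
  .of_bound hg.aestronglyMeasurable C (ae_of_all _ hC)

variable {X : Ω → ℤ} {f : ℤ → ℝ} {a : ℤ}

lemma tendsto_integral_comp_min_mul [IsFiniteMeasure ν] (hX : Measurable X)
    (hfb : ∃ C, ∀ x, |f x| ≤ C) {K : Ω → ℝ} (hK : Measurable K) (hKb : ∃ C, ∀ ω, |K ω| ≤ C) :
    Tendsto (fun m : ℕ => ∫ ω, f (min (X ω) (a + m)) * K ω ∂ν) atTop
      (𝓝 (∫ ω, f (X ω) * K ω ∂ν)) := by
  obtain ⟨C, hC⟩ := hfb
  obtain ⟨D, hD⟩ := hKb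
  refine tendsto_integral_of_dominated_convergence (fun _ => C * D)
    (fun m => ((measurable_of_countable f).comp (hX.min measurable_const)).mul hK
      |>.aestronglyMeasurable) (integrable_const _)
    (fun m => ae_of_all _ fun ω => norm_mul_le_of_le (hC _) (hD ω)) (ae_of_all _ fun ω => ?_)
  refine tendsto_const_nhds.congr' (eventually_atTop.2 ⟨(X ω - a).toNat, fun m hm => ?_⟩)
  dsimp only
  rw [min_eq_left (by omega)]

variable (hX : Measurable X) (hXa : ∀ ω, a ≤ X ω) {H : Ω → ℝ} (hH : Measurable H)
  (hHb : ∃ C, ∀ ω, |H ω| ≤ C)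
  (hA : ∀ t, a < t → ∫ ω in {ω | t ≤ X ω}, H ω ∂ν ≤ ν.real {ω | t ≤ X ω} * ∫ ω, H ω ∂ν)
  (hf : Monotone f) (hfb : ∃ C, ∀ x, |f x| ≤ C)
include hX hXa hH hHb hA hf hfb

lemma integral_comp_min_mul_le [IsProbabilityMeasure ν] (m : ℕ) :
    ∫ ω, f (min (X ω) (a + m)) * H ω ∂ν ≤ (∫ ω, f (min (X ω) (a + m)) ∂ν) * ∫ ω, H ω ∂ν := by
  obtain ⟨C, hC⟩ := hfb
  obtain ⟨D, hD⟩ := hHb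
  induction m with
  | zero => simp [min_eq_right (hXa _), integral_const_mul]
  | succ m ih =>
    set A := {ω | a + (m + 1 : ℕ) ≤ X ω}
    have hAm : MeasurableSet A := measurableSet_le measurable_const hX
    set d := f (a + (m + 1 : ℕ)) - f (a + m)
    have hd : 0 ≤ d := sub_nonneg.2 (hf (by omega))
    have hstep (ω : Ω) : f (min (X ω) (a + (m + 1 : ℕ)))
        = f (min (X ω) (a + m)) + A.indicator (fun _ => d) ω := by
      by_cases h : a + (m + 1 : ℕ) ≤ X ω
      · rw [indicator_of_mem (show ω ∈ A from h), min_eq_right h, min_eq_right (by omega)]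
        ring
      · rw [indicator_of_notMem (show ω ∉ A from h), min_eq_left (by omega),
          min_eq_left (by omega), add_zero]
    have hgm : Measurable fun ω => f (min (X ω) (a + m)) :=
      (measurable_of_countable f).comp (hX.min measurable_const)
    have hHi : Integrable H ν := integrable_of_forall_abs_le hH hD
    simp only [hstep, add_mul, ← indicator_mul_left]
    rw [integral_add (integrable_of_forall_abs_le hgm fun ω => hC _)
        ((integrable_const d).indicator hAm),
      integral_add (hHi.bdd_mul hgm.aestronglyMeasurable (ae_of_all _ fun ω => hC _))
        ((hHi.const_mul d).indicator hAm),
      integral_indicator hAm, integral_indicator_const _ hAm, integral_const_mul, smul_eq_mul]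
    linarith [mul_le_mul_of_nonneg_left (hA (a + (m + 1 : ℕ)) (by omega)) hd]

theorem integral_comp_mul_le_of_forall_setIntegral_le [IsZeroOrProbabilityMeasure ν] :
    ∫ ω, f (X ω) * H ω ∂ν ≤ (∫ ω, f (X ω) ∂ν) * ∫ ω, H ω ∂ν := by
  rcases eq_zero_or_isProbabilityMeasure ν with rfl | _
  · simp
  have hH1 := tendsto_integral_comp_min_mul (ν := ν) (a := a) hX hfb hH hHb
  have h1 := tendsto_integral_comp_min_mul (ν := ν) (a := a) hX hfb measurable_const
    ⟨1, fun _ => abs_one.le⟩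
  simp only [mul_one] at h1
  exact le_of_tendsto_of_tendsto' hH1 (h1.mul_const _)
    (integral_comp_min_mul_le hX hXa hH hHb hA hf hfb)

end LayerCake

lemma setIntegral_cond_le_of_setIntegral_inter_mul_le {Ω : Type*} [MeasurableSpace Ω]
    {μ : Measure Ω} [IsFiniteMeasure μ] {E A : Set Ω} {H : Ω → ℝ} (hA : MeasurableSet A)
    (h : (∫ ω in E ∩ A, H ω ∂μ) * μ.real E ≤ μ.real (E ∩ A) * ∫ ω in E, H ω ∂μ) :
    ∫ ω in A, H ω ∂μ[|E] ≤ (μ[|E]).real A * ∫ ω, H ω ∂μ[|E] := by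
  rcases eq_or_ne (μ E) 0 with h0 | h0
  · simp [cond_eq_zero_of_meas_eq_zero h0]
  have hr : (μ E)⁻¹.toReal * μ.real E = 1 := by
    rw [ENNReal.toReal_inv, measureReal_def, inv_mul_cancel₀]
    exact ENNReal.toReal_ne_zero.2 ⟨h0, measure_ne_top μ E⟩
  rw [ProbabilityTheory.cond, Measure.restrict_smul, Measure.restrict_restrict hA,
    integral_smul_measure, integral_smul_measure, measureReal_ennreal_smul_apply,
    measureReal_restrict_apply hA, inter_comm A, smul_eq_mul, smul_eq_mul]
  calc (μ E)⁻¹.toReal * ∫ ω in E ∩ A, H ω ∂μ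
      = (μ E)⁻¹.toReal ^ 2 * ((∫ ω in E ∩ A, H ω ∂μ) * μ.real E) := by
        linear_combination (-(μ E)⁻¹.toReal * ∫ ω in E ∩ A, H ω ∂μ) * hr
    _ ≤ (μ E)⁻¹.toReal ^ 2 * (μ.real (E ∩ A) * ∫ ω in E, H ω ∂μ) := by gcongr
    _ = _ := by ring

theorem Indep.setIntegral_inter_mul_le {Ω : Type*} {m₁ m₂ mΩ : MeasurableSpace Ω}
    {μ : Measure Ω} {E₁ E₂ A : Set Ω} {G H : Ω → ℝ} (h₁ : m₁ ≤ mΩ) (h₂ : m₂ ≤ mΩ)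
    (hind : Indep m₁ m₂ μ) (hE₁ : MeasurableSet[m₁] E₁) (hE₂ : MeasurableSet[m₂] E₂)
    (hA : MeasurableSet[m₂] A) (hG : Measurable[m₁] G) (hGi : Integrable G μ)
    (hHi : Integrable H μ) (hGH : ∀ ω, G ω ≤ H ω) (hAGH : ∀ ω ∈ A, H ω = G ω) :
    (∫ ω in E₁ ∩ E₂ ∩ A, H ω ∂μ) * μ.real (E₁ ∩ E₂)
      ≤ μ.real (E₁ ∩ E₂ ∩ A) * ∫ ω in E₁ ∩ E₂, H ω ∂μ := by
  have hF : Measurable[m₁] (E₁.indicator G) := hG.indicator hE₁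
  have hsplit {B : Set Ω} (hB : MeasurableSet[m₂] B) :
      ∫ ω in E₁ ∩ B, G ω ∂μ = μ.real B * ∫ ω in E₁, G ω ∂μ := by
    rw [inter_comm, ← setIntegral_indicator (h₁ _ hE₁), ← integral_indicator (h₁ _ hE₁)]
    exact (indep_of_indep_of_le_right hind.symm hF.comap_le).setIntegral_eq_mul h₂ (f := id)
      (hF.mono h₁ le_rfl).aemeasurable hB measurable_id.aestronglyMeasurable
  have hmeas {B : Set Ω} (hB : MeasurableSet[m₂] B) :
      μ.real (E₁ ∩ B) = μ.real E₁ * μ.real B := by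
    simp only [measureReal_def, (Indep_iff _ _ μ).1 hind _ _ hE₁ hB, ENNReal.toReal_mul]
  have hE₂A : MeasurableSet[m₂] (E₂ ∩ A) := hE₂.inter hA
  have hlhs : ∫ ω in E₁ ∩ E₂ ∩ A, H ω ∂μ = μ.real (E₂ ∩ A) * ∫ ω in E₁, G ω ∂μ := by
    rw [inter_assoc, ← hsplit hE₂A]
    exact setIntegral_congr_fun (h₁ _ hE₁ |>.inter (h₂ _ hE₂A)) fun ω hω => hAGH ω hω.2.2
  have hrhs : μ.real E₂ * ∫ ω in E₁, G ω ∂μ ≤ ∫ ω in E₁ ∩ E₂, H ω ∂μ := by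
    rw [← hsplit hE₂]
    exact setIntegral_mono hGi.integrableOn hHi.integrableOn hGH
  rw [hlhs, hmeas hE₂, inter_assoc, hmeas hE₂A]
  calc μ.real (E₂ ∩ A) * (∫ ω in E₁, G ω ∂μ) * (μ.real E₁ * μ.real E₂)
      = μ.real E₁ * μ.real (E₂ ∩ A) * (μ.real E₂ * ∫ ω in E₁, G ω ∂μ) := by ring
    _ ≤ _ := mul_le_mul_of_nonneg_left hrhs (by positivity)

end ProbabilityTheory

lemma le_iff_of_forall_eq_ite {z : ℕ → ℕ} {r : ℕ → Bool}
    (hrec : ∀ k, z (k + 1) = if r k then 0 else z k + 1) (t k : ℕ) :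
    t ≤ z k ↔ (∀ j ∈ Ico (k - t) k, r j = false) ∧ t - k ≤ z 0 := by
  induction k generalizing t with
  | zero => simp
  | succ k ih =>
    rcases t with _ | t
    · simp
    rw [hrec k]
    cases hr : r k
    · simp only [Bool.false_eq_true, if_false, add_le_add_iff_right, ih t,
        Nat.add_sub_add_right]
      constructor
      · rintro ⟨h, h0⟩
        refine ⟨fun j hj => ?_, h0⟩
        rcases eq_or_ne j k with rfl | hjk
        · exact hr
        · exact h j (by simp only [mem_Ico] at hj ⊢; omega)
      · rintro ⟨h, h0⟩
        exact ⟨fun j hj => h j (by simp only [mem_Ico] at hj ⊢; omega), h0⟩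
    · simp only [if_true, nonpos_iff_eq_zero, Nat.add_eq_zero_iff, one_ne_zero, and_false,
        false_iff, not_and]
      intro h
      simpa [hr] using h k (by simp only [mem_Ico]; omega)

namespace Seed

variable {Ω : Type*} (Z : ℕ → Ω → ℕ) (R : ℕ → Ω → Bool)

def gen (i : Option ℕ) : Ω → ℕ := i.elim (Z 0) fun k ω => if R k ω then 1 else 0

def value (k : ℕ) (ω : Ω) : ℤ := if R k ω then (Z k ω : ℤ) else -1

abbrev sigma (T : Set (Option ℕ)) : MeasurableSpace Ω :=
  ⨆ i ∈ T, MeasurableSpace.comap (gen Z R i) inferInstance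

/-- The seed and the coins before step `c`. For `c = 0` the seed belongs to the complementary
block instead, since the event `t ≤ value Z R L` with `L ≤ t` depends on it. -/
def past (c : ℕ) : Set (Option ℕ) := {i | i.elim (0 < c) (· < c)}

variable {Z R}

@[simp] lemma none_mem_past {c : ℕ} : none ∈ past c ↔ 0 < c := Iff.rfl

@[simp] lemma some_mem_past {c k : ℕ} : some k ∈ past c ↔ k < c := Iff.rfl

lemma neg_one_le_value (k : ℕ) (ω : Ω) : -1 ≤ value Z R k ω := by
  unfold value; split <;> omega

lemma value_eq_neg_one_iff {k : ℕ} {ω : Ω} : value Z R k ω = -1 ↔ R k ω = false := by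
  unfold value; cases R k ω <;> simp

lemma natCast_le_value_iff {t k : ℕ} {ω : Ω} :
    (t : ℤ) ≤ value Z R k ω ↔ R k ω = true ∧ t ≤ Z k ω := by
  unfold value; cases R k ω <;> simp; omega

lemma value_eq_neg_one_of_natCast_le_value
    (hrec : ∀ k ω, Z (k + 1) ω = if R k ω then 0 else Z k ω + 1) {t L i : ℕ} {ω : Ω}
    (h : (t : ℤ) ≤ value Z R L ω) (hi : i ∈ Ico (L - t) L) : value Z R i ω = -1 := by
  rw [natCast_le_value_iff, le_iff_of_forall_eq_ite (z := (Z · ω)) (r := (R · ω)) (hrec · ω)] at h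
  exact value_eq_neg_one_iff.2 (h.2.1 i hi)

section Sigma

variable {T : Set (Option ℕ)}
  (hrec : ∀ k ω, Z (k + 1) ω = if R k ω then 0 else Z k ω + 1)

lemma measurable_gen_sigma {i : Option ℕ} (hi : i ∈ T) : Measurable[sigma Z R T] (gen Z R i) :=
  measurable_iff_comap_le.2 (le_iSup₂ (f := fun i _ => MeasurableSpace.comap (gen Z R i) _) i hi)

lemma measurable_R_sigma {k : ℕ} (hk : some k ∈ T) : Measurable[sigma Z R T] (R k) := by
  have : R k = (fun v : ℕ => decide (v = 1)) ∘ gen Z R (some k) := by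
    ext ω; simp only [gen, Option.elim_some, Function.comp_apply]; cases R k ω <;> simp
  rw [this]
  exact (measurable_of_countable _).comp (measurable_gen_sigma hk)

include hrec in
lemma measurable_Z_sigma (h0 : none ∈ T) {k : ℕ} (hk : ∀ j < k, some j ∈ T) :
    Measurable[sigma Z R T] (Z k) := by
  induction k with
  | zero => exact measurable_gen_sigma h0
  | succ k ih =>
    rw [show Z (k + 1) = _ from funext (hrec k)]
    exact Measurable.ite (measurable_R_sigma (hk k k.lt_succ_self) (measurableSet_singleton true))
      measurable_const ((ih fun j hj => hk j (by omega)).add_const 1)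

include hrec in
lemma measurable_value_sigma (h0 : none ∈ T) {k : ℕ} (hk : ∀ j ≤ k, some j ∈ T) :
    Measurable[sigma Z R T] (value Z R k) :=
  Measurable.ite (measurable_R_sigma (hk k le_rfl) (measurableSet_singleton true))
    ((measurable_of_countable _).comp (measurable_Z_sigma hrec h0 fun j hj => hk j hj.le))
    measurable_const

lemma measurableSet_forall_value_eq_neg_one_sigma {n : ℕ} (S : Finset (Fin n)) {P : ℕ → Prop}
    (hP : ∀ k, P k → some k ∈ T) :
    MeasurableSet[sigma Z R T] {ω | ∀ i ∈ S, P i → value Z R i ω = -1} := by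
  simp only [value_eq_neg_one_iff, ofPred_forall]
  exact .iInter fun i => .iInter fun _ => .iInter fun hi =>
    measurable_R_sigma (hP i hi) (measurableSet_singleton false)

include hrec in
lemma measurable_ite_lt_value_sigma {n c : ℕ} :
    Measurable[sigma Z R (past c)]
      fun ω (i : Fin n) => if (i : ℕ) < c then value Z R i ω else -1 := by
  refine @measurable_pi_lambda _ (Fin n) (fun _ => ℤ) (sigma Z R (past c)) _ _ fun i => ?_
  by_cases hi : (i : ℕ) < c
  · simp only [hi, if_true]
    exact measurable_value_sigma hrec (by simp; omega) fun j hj => by simp; omega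
  · simp only [hi, if_false]
    exact measurable_const

include hrec in
lemma measurableSet_natCast_le_value_sigma (t L : ℕ) :
    MeasurableSet[sigma Z R (past (L - t))ᶜ] {ω | (t : ℤ) ≤ value Z R L ω} := by
  have hfut {k : ℕ} (hk : L - t ≤ k) : some k ∈ (past (L - t))ᶜ := by
    simpa using hk
  have hset : {ω | (t : ℤ) ≤ value Z R L ω} = {ω | R L ω = true} ∩
      ((⋂ j ∈ Ico (L - t) L, {ω | R j ω = false}) ∩ Z 0 ⁻¹' Ici (t - L)) := by
    ext ω
    simp only [mem_ofPred_eq, mem_inter_iff, mem_iInter, mem_preimage, mem_Ici]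
    rw [natCast_le_value_iff,
      le_iff_of_forall_eq_ite (z := (Z · ω)) (r := (R · ω)) (hrec · ω)]
  rw [hset]
  refine (measurable_R_sigma (hfut (by omega)) (measurableSet_singleton true)).inter
    ((MeasurableSet.biInter (to_countable _) fun j hj =>
      measurable_R_sigma (hfut (mem_Ico.1 hj).1) (measurableSet_singleton false)).inter ?_)
  rcases le_or_gt t L with htL | hLt
  · rw [Nat.sub_eq_zero_of_le htL, ← Nat.bot_eq_zero, Ici_bot, preimage_univ]
    exact MeasurableSet.univ
  · refine measurable_gen_sigma (i := none) ?_ measurableSet_Ici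
    rw [mem_compl_iff, none_mem_past]; omega

end Sigma

variable [MeasurableSpace Ω] (hZ : Measurable (Z 0)) (hR : ∀ k, Measurable (R k))
include hZ hR

lemma measurable_gen (i : Option ℕ) : Measurable (gen Z R i) := by
  rcases i with _ | k
  · exact hZ
  · exact Measurable.ite (hR k (measurableSet_singleton true)) measurable_const measurable_const

lemma sigma_le (T : Set (Option ℕ)) : sigma Z R T ≤ ‹MeasurableSpace Ω› :=
  iSup₂_le fun i _ => (measurable_gen hZ hR i).comap_le

lemma indep_sigma_compl {μ : Measure Ω} (hindep : iIndepFun (gen Z R) μ) (T : Set (Option ℕ)) :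
    Indep (sigma Z R T) (sigma Z R Tᶜ) μ :=
  indep_iSup_of_disjoint (fun i => (measurable_gen hZ hR i).comap_le) hindep disjoint_compl_right

variable (hrec : ∀ k ω, Z (k + 1) ω = if R k ω then 0 else Z k ω + 1)
include hrec

lemma measurable_value (k : ℕ) : Measurable (value Z R k) :=
  (measurable_value_sigma (T := univ) hrec trivial fun _ _ => trivial).mono
    (sigma_le hZ hR _) le_rfl

theorem setIntegral_cond_le {μ : Measure Ω} [IsFiniteMeasure μ] (hindep : iIndepFun (gen Z R) μ)
    {n L : ℕ} {F : (Fin n → ℤ) → ℝ} (hFb : ∃ C, ∀ x, |F x| ≤ C)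
    (hF : ∀ x y : Fin n → ℤ, (∀ i : Fin n, (i : ℕ) < L → x i ≤ y i) → F x ≤ F y)
    (S : Finset (Fin n)) (t : ℕ) :
    ∫ ω in {ω | (t : ℤ) ≤ value Z R L ω}, F (fun i => value Z R i ω)
        ∂μ[|{ω | ∀ i ∈ S, value Z R i ω = -1}]
      ≤ (μ[|{ω | ∀ i ∈ S, value Z R i ω = -1}]).real {ω | (t : ℤ) ≤ value Z R L ω} *
        ∫ ω, F (fun i => value Z R i ω) ∂μ[|{ω | ∀ i ∈ S, value Z R i ω = -1}] := by
  set c := L - t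
  set E₁ := {ω | ∀ i ∈ S, (i : ℕ) < c → value Z R i ω = -1}
  set E₂ := {ω | ∀ i ∈ S, c ≤ (i : ℕ) → value Z R i ω = -1}
  set A := {ω | (t : ℤ) ≤ value Z R L ω}
  set H := fun ω => F (fun i => value Z R i ω)
  set G := fun ω => F (fun i => if (i : ℕ) < c then value Z R i ω else -1)
  have hE : {ω | ∀ i ∈ S, value Z R i ω = -1} = E₁ ∩ E₂ := by
    ext ω
    simp only [E₁, E₂, mem_inter_iff, mem_ofPred_eq]
    exact ⟨fun h => ⟨fun i hi _ => h i hi, fun i hi _ => h i hi⟩,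
      fun h i hi => (lt_or_ge (i : ℕ) c).elim (h.1 i hi) (h.2 i hi)⟩
  have hE₁ : MeasurableSet[sigma Z R (past c)] E₁ :=
    measurableSet_forall_value_eq_neg_one_sigma S fun _ => some_mem_past.2
  have hE₂ : MeasurableSet[sigma Z R (past c)ᶜ] E₂ :=
    measurableSet_forall_value_eq_neg_one_sigma S fun _ hk => by simpa using hk
  have hA : MeasurableSet[sigma Z R (past c)ᶜ] A :=
    measurableSet_natCast_le_value_sigma hrec t L
  have hG : Measurable[sigma Z R (past c)] G :=
    (measurable_of_countable F).comp (measurable_ite_lt_value_sigma hrec)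
  have hGH (ω : Ω) : G ω ≤ H ω := hF _ _ fun i _ => by
    split_ifs
    exacts [le_rfl, neg_one_le_value _ _]
  have hHG : ∀ ω ∈ A, H ω = G ω := fun ω hω => le_antisymm (hF _ _ fun i hiL => by
    split_ifs with hic
    exacts [le_rfl, (value_eq_neg_one_of_natCast_le_value hrec hω ⟨by omega, hiL⟩).le]) (hGH ω)
  obtain ⟨C, hC⟩ := hFb
  have hle := sigma_le hZ hR
  have hHm : Measurable H := (measurable_of_countable F).comp
    (measurable_pi_lambda _ fun i => measurable_value hZ hR hrec i)
  refine setIntegral_cond_le_of_setIntegral_inter_mul_le (hle _ _ hA) ?_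
  rw [hE]
  exact (indep_sigma_compl hZ hR hindep _).setIntegral_inter_mul_le (hle _) (hle _) hE₁ hE₂ hA hG
    (integrable_of_forall_abs_le (hG.mono (hle _) le_rfl) fun ω => hC _)
    (integrable_of_forall_abs_le hHm fun ω => hC _) hGH hHG

end Seed

theorem stmt18
    {Ω : Type*} [MeasurableSpace Ω] (μ : Measure Ω) [IsProbabilityMeasure μ]
    (n : ℕ) (hn : 1 ≤ n)
    (Z : ℕ → Ω → ℕ) (R : ℕ → Ω → Bool)
    (hZm : ∀ k, Measurable (Z k)) (hRm : ∀ k, Measurable (R k))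
    (hindep : iIndepFun
      (fun i : Option ℕ =>
        i.elim (Z 0) (fun k ω => if R k ω then (1 : ℕ) else 0)) μ)
    (hrec : ∀ k ω, Z (k + 1) ω = if R k ω then 0 else Z k ω + 1)
    (Y : Fin n → Ω → ℤ)
    (hY : ∀ (i : Fin n) (ω : Ω),
      Y i ω = if R (i : ℕ) ω then (Z (i : ℕ) ω : ℤ) else -1)
    (S : Finset (Fin n))
    (E : Set Ω) (hE : E = {ω | ∀ i ∈ S, Y i ω = -1})
    (f₁ : ℤ → ℝ) (hf₁mono : Monotone f₁) (hf₁bd : ∃ C, ∀ x, |f₁ x| ≤ C)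
    (f₂ : (Fin n → ℤ) → ℝ)
    (hf₂bd : ∃ C, ∀ x, |f₂ x| ≤ C)
    (hf₂mono : ∀ x y : Fin n → ℤ,
      (∀ i : Fin n, (i : ℕ) < n - 1 → x i ≤ y i) → f₂ x ≤ f₂ y) :
    ∫ ω, f₁ (Y ⟨n - 1, by omega⟩ ω) * f₂ (fun i => Y i ω) ∂(μ[|E])
      ≤ (∫ ω, f₁ (Y ⟨n - 1, by omega⟩ ω) ∂(μ[|E])) *
          ∫ ω, f₂ (fun i => Y i ω) ∂(μ[|E]) := by
  obtain rfl : Y = fun (i : Fin n) => Seed.value Z R i := funext fun i => funext (hY i)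
  subst hE
  obtain ⟨C, hC⟩ := hf₂bd
  have hvalue := Seed.measurable_value (hZm 0) hRm hrec
  refine integral_comp_mul_le_of_forall_setIntegral_le (hvalue _) (Seed.neg_one_le_value _)
    ((measurable_of_countable f₂).comp (measurable_pi_lambda _ fun i => hvalue i))
    ⟨C, fun ω => hC _⟩ (fun t ht => ?_) hf₁mono hf₁bd
  lift t to ℕ using (by omega)
  exact Seed.setIntegral_cond_le (hZm 0) hRm hrec hindep ⟨C, hC⟩ hf₂mono S t
end
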